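/- arXiv:2503.16019 — 5 statements merged into one kernel-verified Lean document; each statement's English description precedes it below -/
import Mathlib

section
/- For all integers n ≥ 0, pond(3n + 2) ≡ 0 (mod 2). -/
namespace PondAux

def chain (u x y : ℕ) : ℕ → Multiset ℕ
  | 0 => Multiset.replicate (2*x) u + Multiset.replicate y (2*u)
  | l+1 => chain u x x l + Multiset.replicate y (2^(l+2) * u)

lemma pow_mul_left_inj {u : ℕ} (hu : 0 < u) {i j : ℕ} (h : 2^i * u = 2^j * u) : i = j := by
  have := Nat.eq_of_mul_eq_mul_right hu h
  exact Nat.pow_right_injective (le_refl 2) this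

lemma sum_chain (u x y l : ℕ) : (chain u x y l).sum = 2^(l+1) * u * (x + y) := by
  induction l generalizing y with
  | zero => simp [chain, Multiset.sum_replicate]; ring
  | succ l ih =>
    simp only [chain, Multiset.sum_add, ih, Multiset.sum_replicate, smul_eq_mul]
    ring

lemma mem_chain {u x y l m : ℕ} (hm : m ∈ chain u x y l) : ∃ j, m = 2^j * u := by
  induction l generalizing y with
  | zero =>
    rcases Multiset.mem_add.1 hm with h | h
    · exact ⟨0, by simpa using (Multiset.eq_of_mem_replicate h)⟩
    · exact ⟨1, by simpa [pow_succ] using (Multiset.eq_of_mem_replicate h)⟩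
  | succ l ih =>
    rcases Multiset.mem_add.1 hm with h | h
    · exact ih h
    · exact ⟨l+2, Multiset.eq_of_mem_replicate h⟩

lemma count_replicate_pow {u : ℕ} (hu : 0 < u) (n i j : ℕ) :
    (Multiset.replicate n (2^i * u)).count (2^j * u) = if j = i then n else 0 := by
  rw [Multiset.count_replicate]
  by_cases h : j = i
  · simp [h]
  · rw [if_neg h, if_neg (fun hc => h (pow_mul_left_inj hu hc.symm))]

lemma count_chain_pow {u : ℕ} (hu : 0 < u) (x y l j : ℕ) :
    (chain u x y l).count (2^j * u) =
      if j = 0 then 2*x else if j ≤ l then x else if j = l+1 then y else 0 := by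
  induction l generalizing y with
  | zero =>
    have h0 : (Multiset.replicate (2*x) u) = Multiset.replicate (2*x) (2^0 * u) := by norm_num
    have h1 : (Multiset.replicate y (2*u)) = Multiset.replicate y (2^1 * u) := by norm_num
    rw [chain, h0, h1, Multiset.count_add, count_replicate_pow hu, count_replicate_pow hu]
    split_ifs <;> omega
  | succ l ih =>
    rw [chain, Multiset.count_add, ih, count_replicate_pow hu]
    split_ifs <;> omega

lemma count_chain_other {u x y l m : ℕ} (hm : ∀ j, m ≠ 2^j * u) :
    (chain u x y l).count m = 0 := by
  rw [Multiset.count_eq_zero]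
  intro hmem
  obtain ⟨j, hj⟩ := mem_chain hmem
  exact hm j hj

lemma odd_pow2_eq {u w : ℕ} (hu : u % 2 = 1) (hw : w % 2 = 1) :
    ∀ {i j : ℕ}, 2^i * w = 2^j * u → w = u ∧ i = j := by
  intro i
  induction i with
  | zero =>
    intro j h
    cases j with
    | zero => simpa using h
    | succ j =>
      exfalso
      have : w = 2 * (2^j * u) := by
        calc w = 2^0 * w := by ring
          _ = 2^(j+1) * u := h
          _ = 2 * (2^j * u) := by ring
      omega
  | succ i ih =>
    intro j h
    cases j with
    | zero =>
      exfalso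
      have : u = 2 * (2^i * w) := by
        calc u = 2^0 * u := by ring
          _ = 2^(i+1) * w := h.symm
          _ = 2 * (2^i * w) := by ring
      omega
    | succ j =>
      have h' : 2^i * w = 2^j * u := by
        have h2 : 2 * (2^i * w) = 2 * (2^j * u) := by
          calc 2 * (2^i * w) = 2^(i+1) * w := by ring
          _ = 2^(j+1) * u := h
          _ = 2 * (2^j * u) := by ring
        omega
      obtain ⟨h1, h2⟩ := ih h'
      exact ⟨h1, by omega⟩

/-- `Sf P u i`: for odd `u`, position `i` of the sequence attached to `u`:
position 0 is `k_u` (number of surplus pairs of part `u`), position `i ≥ 1` is the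
multiplicity of the part `2^i * u`. -/
def Sf (P : Multiset ℕ) (u i : ℕ) : ℕ :=
  if i = 0 then P.count u / 2 - P.count u % 2 else P.count (2^i * u)

def GoodC (N : ℕ) (P : Multiset ℕ) (c : ℕ) : Prop :=
  c % (N+1) % 2 = 1 ∧ Sf P (c % (N+1)) (c / (N+1) + 1) ≠ Sf P (c % (N+1)) 0

instance (N : ℕ) (P : Multiset ℕ) : DecidablePred (GoodC N P) := fun _ => by
  unfold GoodC; exact instDecidableAnd

open scoped Classical in
noncomputable def next (N : ℕ) (P : Multiset ℕ) : Multiset ℕ :=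
  if hex : ∃ c, GoodC N P c then
    P - chain (Nat.find hex % (N+1)) (Sf P (Nat.find hex % (N+1)) 0)
        (Sf P (Nat.find hex % (N+1)) (Nat.find hex / (N+1) + 1)) (Nat.find hex / (N+1))
      + chain (Nat.find hex % (N+1)) (Sf P (Nat.find hex % (N+1)) (Nat.find hex / (N+1) + 1))
        (Sf P (Nat.find hex % (N+1)) 0) (Nat.find hex / (N+1))
  else P

section Main

variable {N : ℕ} {P : Multiset ℕ}

lemma count_eq_zero_of_gt (hpos : ∀ a ∈ P, 0 < a) (hsum : P.sum = N) {m : ℕ} (hm : N < m) :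
    P.count m = 0 := by
  rw [Multiset.count_eq_zero]
  intro hmem
  have := Multiset.single_le_sum (fun x _ => Nat.zero_le x) m hmem
  omega

lemma exists_good (hN : N % 3 = 2) (hpos : ∀ a ∈ P, 0 < a) (hsum : P.sum = N)
    (hpond : ∀ k ∈ P, Odd k → 2 ≤ P.count k) : ∃ c, GoodC N P c := by
  by_contra hcon
  push_neg at hcon
  -- all sequences are constant
  have hconst : ∀ u, u % 2 = 1 → ∀ i, Sf P u (i+1) = Sf P u 0 := by
    intro u hu i
    by_cases hle : u ≤ N
    · have h1 : ((N+1) * i + u) % (N+1) = u := by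
        rw [Nat.mul_add_mod]
        exact Nat.mod_eq_of_lt (by omega)
      have h2 : ((N+1) * i + u) / (N+1) = i := by
        rw [Nat.mul_add_div (by omega)]
        simp [Nat.div_eq_of_lt (show u < N+1 by omega)]
      have := hcon ((N+1) * i + u)
      rw [GoodC, h1, h2] at this
      simpa [hu] using (not_and.mp this) hu
    · -- u > N : all counts vanish
      have hz : ∀ k, P.count (2^k * u) = 0 := by
        intro k
        apply count_eq_zero_of_gt hpos hsum
        have : u ≤ 2^k * u := Nat.le_mul_of_pos_left u (pow_pos (by norm_num) k)
        omega
      have h0 : P.count u = 0 := by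
        have := hz 0; simpa using this
      simp [Sf, h0, hz]
  -- hence every part of P is odd with multiplicity 3
  -- first: for odd u, Sf P u 0 = 0
  have hzero : ∀ u, u % 2 = 1 → Sf P u 0 = 0 := by
    intro u hu
    have h1 : Sf P u ((N+1)+1) = Sf P u 0 := hconst u hu _
    have h2 : Sf P u ((N+1)+1) = 0 := by
      rw [Sf, if_neg (by omega)]
      apply count_eq_zero_of_gt hpos hsum
      have hu0 : 0 < u := by omega
      calc N < 2^N := Nat.lt_two_pow_self
        _ ≤ 2^(N+2) := Nat.pow_le_pow_right (by norm_num) (by omega)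
        _ = 2^(N+2) * 1 := by ring
        _ ≤ 2^(N+2) * u := Nat.mul_le_mul_left _ hu0
    omega
  have hcount3 : ∀ a ∈ P, P.count a = 3 := by
    intro a ha
    rcases Nat.even_or_odd a with hev | hod
    · -- even part: contradiction
      exfalso
      have ha0 : a ≠ 0 := by
        have := hpos a ha; omega
      set k := a.factorization 2 with hk
      set u := a / 2^k with hu
      have hfact : 2^k * u = a := by
        rw [hu, hk]
        exact Nat.ordProj_mul_ordCompl_eq_self a 2
      have hk1 : 1 ≤ k := by
        rw [hk]
        have : 2 ∣ a := even_iff_two_dvd.mp hev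
        exact (Nat.Prime.factorization_pos_of_dvd Nat.prime_two ha0 this)
      have huodd : u % 2 = 1 := by
        have hnd : ¬ 2 ∣ u := by
          rw [hu, hk]
          exact Nat.not_dvd_ordCompl Nat.prime_two ha0
        omega
      have hk' : k - 1 + 1 = k := by omega
      have : P.count a = Sf P u ((k-1)+1) := by
        rw [Sf, if_neg (by omega), hk', hfact]
      rw [hconst u huodd, hzero u huodd] at this
      have : a ∉ P := Multiset.count_eq_zero.mp this
      exact this ha
    · have hod' : a % 2 = 1 := Nat.odd_iff.mp hod
      have h2 : 2 ≤ P.count a := hpond a ha hod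
      have h0 : Sf P a 0 = 0 := hzero a hod'
      rw [Sf, if_pos rfl] at h0
      omega
  have hdvd : ∀ a, 3 ∣ P.count a := by
    intro a
    by_cases ha : a ∈ P
    · rw [hcount3 a ha]
    · simp [Multiset.count_eq_zero.mpr ha]
  obtain ⟨t, ht⟩ := Multiset.exists_smul_of_dvd_count P (fun a _ => hdvd a)
  have : P.sum = 3 * t.sum := by
    rw [ht]
    induction 3 with
    | zero => simp
    | succ n ih => simp [succ_nsmul, Multiset.sum_add, ih]; ring
  omega

end Main

section Spec

variable {N : ℕ} {P : Multiset ℕ}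

theorem next_spec (hN : N % 3 = 2) (hpos : ∀ a ∈ P, 0 < a) (hsum : P.sum = N)
    (hpond : ∀ k ∈ P, Odd k → 2 ≤ P.count k) :
    (∀ a ∈ next N P, 0 < a) ∧ (next N P).sum = N ∧
      (∀ k ∈ next N P, Odd k → 2 ≤ (next N P).count k) ∧
      next N P ≠ P ∧ next N (next N P) = P := by
  have hex := exists_good hN hpos hsum hpond
  set c0 := Nat.find hex with hc0
  set u := c0 % (N+1) with hudef
  set l := c0 / (N+1) with hldef
  set x := Sf P u 0 with hxdef
  set y := Sf P u (l+1) with hydef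
  have hgood : GoodC N P c0 := Nat.find_spec hex
  have hmin : ∀ c, c < c0 → ¬ GoodC N P c := fun c hc => Nat.find_min hex hc
  have huodd : u % 2 = 1 := hgood.1
  have hu : 0 < u := by omega
  have huN : u < N + 1 := by rw [hudef]; exact Nat.mod_lt _ (by omega)
  have hyx : y ≠ x := hgood.2
  have hsplit : (N+1) * l + u = c0 := by rw [hldef, hudef]; exact Nat.div_add_mod c0 (N+1)
  have hQdef : next N P = P - chain u x y l + chain u y x l := by
    rw [next, dif_pos hex, ← hc0, ← hudef, ← hldef, ← hxdef, ← hydef]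
  clear_value y x l u c0
  set Q := P - chain u x y l + chain u y x l with hQ
  rw [hQdef]
  -- middle counts of P
  have hmid' : ∀ j, j < l → P.count (2^(j+1) * u) = x := by
    intro j hj
    have hcode : (N+1) * j + u < c0 := by
      have h2 : (N+1)*(j+1) ≤ (N+1)*l := Nat.mul_le_mul_left _ (by omega)
      have h3 : (N+1)*(j+1) = (N+1)*j + (N+1) := Nat.mul_succ _ _
      omega
    have hng := hmin _ hcode
    rw [GoodC] at hng
    push_neg at hng
    have h1 : ((N+1) * j + u) % (N+1) = u := by
      rw [Nat.mul_add_mod]; exact Nat.mod_eq_of_lt huN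
    have h2 : ((N+1) * j + u) / (N+1) = j := by
      rw [Nat.mul_add_div (by omega)]
      simp [Nat.div_eq_of_lt huN]
    rw [h1, h2] at hng
    have hthis := hng huodd
    rw [Sf, if_neg (show ¬(j+1 = 0) by omega)] at hthis
    rw [← hxdef] at hthis
    exact hthis
  have hmid : ∀ j, 1 ≤ j → j ≤ l → P.count (2^j * u) = x := by
    intro j h1 h2
    have := hmid' (j-1) (by omega)
    rwa [(by omega : j-1+1 = j)] at this
  have htop : P.count (2^(l+1) * u) = y := by
    rw [hydef, Sf, if_neg (show ¬(l+1 = 0) by omega)]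
  have hx0 : x = P.count u / 2 - P.count u % 2 := by rw [hxdef, Sf, if_pos rfl]
  have heps : P.count u % 2 < 2 := Nat.mod_lt _ (by omega)
  have hx2 : P.count u = 2*x + 3*(P.count u % 2) := by
    by_cases h : P.count u % 2 = 1
    · have hmem : u ∈ P := by rw [← Multiset.count_pos]; omega
      have h2 : 2 ≤ P.count u := hpond u hmem (Nat.odd_iff.mpr huodd)
      omega
    · omega
  have he0 : (2:ℕ)^0 * u = u := by norm_num
  have hOldle : chain u x y l ≤ P := by
    rw [Multiset.le_iff_count]
    intro m
    by_cases hm : ∃ j, m = 2^j * u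
    · obtain ⟨j, rfl⟩ := hm
      rw [count_chain_pow hu]
      split_ifs with h0 hjl hjl1
      · subst h0; rw [he0]; omega
      · exact le_of_eq (hmid j (by omega) hjl).symm
      · exact le_of_eq (hjl1 ▸ htop).symm
      · exact Nat.zero_le _
    · push_neg at hm
      rw [count_chain_other hm]
      exact Nat.zero_le _
  have hQc : ∀ m, Q.count m = P.count m - (chain u x y l).count m + (chain u y x l).count m := by
    intro m; rw [hQ, Multiset.count_add, Multiset.count_sub]
  have hQu : Q.count u = 2*y + 3*(P.count u % 2) := by
    have c1 := count_chain_pow hu x y l 0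
    have c2 := count_chain_pow hu y x l 0
    rw [he0] at c1 c2
    norm_num at c1 c2
    rw [hQc u, c1, c2]
    omega
  have hQmid : ∀ j, 1 ≤ j → j ≤ l → Q.count (2^j * u) = y := by
    intro j h1 h2
    rw [hQc, count_chain_pow hu, count_chain_pow hu, hmid j h1 h2]
    split_ifs <;> first | omega | (exfalso; assumption)
  have hQtop : Q.count (2^(l+1) * u) = x := by
    rw [hQc, count_chain_pow hu, count_chain_pow hu, htop]
    split_ifs <;> first | omega | (exfalso; assumption)
  have hQother : ∀ m, (∀ j, m ≠ 2^j * u) → Q.count m = P.count m := by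
    intro m hm
    rw [hQc, count_chain_other hm, count_chain_other hm]
    omega
  -- positivity
  have hQpos : ∀ a ∈ Q, 0 < a := by
    intro a ha
    rw [hQ] at ha
    rcases Multiset.mem_add.1 ha with h | h
    · exact hpos a (Multiset.mem_of_le (tsub_le_self) h)
    · obtain ⟨j, rfl⟩ := mem_chain h
      exact Nat.mul_pos (pow_pos (by norm_num) j) hu
  -- sum
  have hQsum : Q.sum = N := by
    have hs1 : Q.sum = (P - chain u x y l).sum + (chain u y x l).sum := by
      rw [hQ, Multiset.sum_add]
    have hs2 : (P - chain u x y l).sum + (chain u x y l).sum = P.sum := by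
      rw [← Multiset.sum_add, tsub_add_cancel_of_le hOldle]
    have hsOld := sum_chain u x y l
    have hsNew := sum_chain u y x l
    rw [Nat.add_comm y x] at hsNew
    omega
  -- POND property
  have hQpond : ∀ k ∈ Q, Odd k → 2 ≤ Q.count k := by
    intro k hk hkodd
    have hkodd' := Nat.odd_iff.mp hkodd
    have hkpos : 0 < Q.count k := Multiset.count_pos.mpr hk
    by_cases hku : k = u
    · subst hku
      rw [hQu] at hkpos ⊢
      omega
    · have hnot : ∀ j, k ≠ 2^j * u := by
        intro j hj
        cases j with
        | zero => rw [he0] at hj; exact hku hj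
        | succ j =>
          have : k = 2 * (2^j * u) := by rw [hj]; ring
          omega
      rw [hQother k hnot] at hkpos ⊢
      exact hpond k (Multiset.count_pos.mp hkpos) hkodd
  -- next N P ≠ P
  have hQne : Q ≠ P := by
    intro hEq
    have : Q.count u = P.count u := by rw [hEq]
    rw [hQu, hx2] at this
    omega
  -- Sf values of Q
  have hSQ0 : Sf Q u 0 = y := by
    rw [Sf, if_pos rfl, hQu]
    omega
  have hSQtop : Sf Q u (l+1) = x := by
    rw [Sf, if_neg (show ¬(l+1 = 0) by omega)]
    exact hQtop
  have hSQmid : ∀ j, j < l → Sf Q u (j+1) = y := by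
    intro j hj
    rw [Sf, if_neg (show ¬(j+1 = 0) by omega)]
    exact hQmid (j+1) (by omega) (by omega)
  have hSQw : ∀ w, w % 2 = 1 → w ≠ u → ∀ i, Sf Q w i = Sf P w i := by
    intro w hw hwu i
    have hnot : ∀ i' j, 2^i' * w ≠ 2^j * u := by
      intro i' j h
      exact hwu (odd_pow2_eq huodd hw h).1
    have hw0 : ∀ j, w ≠ 2^j * u := by
      intro j h
      exact hnot 0 j (by rw [pow_zero, one_mul]; exact h)
    cases i with
    | zero => rw [Sf, if_pos rfl, Sf, if_pos rfl, hQother w hw0]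
    | succ i =>
      rw [Sf, if_neg (show ¬(i+1 = 0) by omega), Sf, if_neg (show ¬(i+1 = 0) by omega),
        hQother _ (hnot (i+1))]
  -- the involution
  have hgoodQ : GoodC N Q c0 := by
    constructor
    · rw [← hudef]; exact huodd
    · rw [← hudef, ← hldef, hSQtop, hSQ0]
      exact hyx.symm
  have hexQ : ∃ c, GoodC N Q c := ⟨c0, hgoodQ⟩
  have hfindQ : Nat.find hexQ = c0 := by
    rw [Nat.find_eq_iff]
    refine ⟨hgoodQ, ?_⟩
    intro c hc hgc
    obtain ⟨hgc1, hgc2⟩ := hgc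
    have hsplit2 : (N+1) * (c / (N+1)) + c % (N+1) = c := Nat.div_add_mod c (N+1)
    by_cases hwu : c % (N+1) = u
    · rw [hwu] at hgc1 hgc2
      have hil : c / (N+1) < l := by
        generalize hI : c / (N+1) = i at hsplit2 hgc2 ⊢
        by_contra hge
        push_neg at hge
        have := Nat.mul_le_mul_left (N+1) hge
        omega
      rw [hSQmid _ hil, hSQ0] at hgc2
      exact hgc2 rfl
    · exact hmin c hc ⟨hgc1, by
        rw [← hSQw _ hgc1 hwu, ← hSQw _ hgc1 hwu]
        exact hgc2⟩
  have hinv : next N Q = P := by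
    rw [next, dif_pos hexQ, hfindQ, ← hudef, ← hldef, hSQ0, hSQtop, hQ,
      add_tsub_cancel_right]
    exact tsub_add_cancel_of_le hOldle
  exact ⟨hQpos, hQsum, hQpond, hQne, hinv⟩

end Spec

end PondAux


/-- A POND partition of `n` is a partition of `n` in which no odd part appears
exactly once, i.e. every odd part that appears occurs with multiplicity at
least 2.  `pond n` counts the POND partitions of `n` (with `pond 0 = 1`,
corresponding to the empty partition). -/
noncomputable def pond (n : ℕ) : ℕ :=
  Nat.card {p : n.Partition // ∀ k ∈ p.parts, Odd k → 2 ≤ p.parts.count k}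

theorem pond_three_n_add_two_mod_two (n : ℕ) : pond (3 * n + 2) ≡ 0 [MOD 2] := by
  classical
  have hN : (3 * n + 2) % 3 = 2 := by omega
  set T := {p : (3 * n + 2).Partition // ∀ k ∈ p.parts, Odd k → 2 ≤ p.parts.count k} with hT
  letI : Fintype T := Fintype.ofFinite T
  have spec : ∀ p : T, (∀ a ∈ PondAux.next (3 * n + 2) p.1.parts, 0 < a) ∧
      (PondAux.next (3 * n + 2) p.1.parts).sum = 3 * n + 2 ∧
      (∀ k ∈ PondAux.next (3 * n + 2) p.1.parts, Odd k →
        2 ≤ (PondAux.next (3 * n + 2) p.1.parts).count k) ∧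
      PondAux.next (3 * n + 2) p.1.parts ≠ p.1.parts ∧
      PondAux.next (3 * n + 2) (PondAux.next (3 * n + 2) p.1.parts) = p.1.parts :=
    fun p => PondAux.next_spec hN (fun _ ha => p.1.parts_pos ha) p.1.parts_sum p.2
  let f : T → T := fun p =>
    ⟨⟨PondAux.next (3 * n + 2) p.1.parts, fun {a} ha => (spec p).1 a ha, (spec p).2.1⟩,
      (spec p).2.2.1⟩
  have hparts : ∀ p : T, (f p).1.parts = PondAux.next (3 * n + 2) p.1.parts := fun p => rfl
  have hff : ∀ p : T, f (f p) = p := by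
    intro p
    apply Subtype.ext
    apply Nat.Partition.ext
    rw [hparts, hparts]
    exact (spec p).2.2.2.2
  have hne : ∀ p : T, f p ≠ p := by
    intro p hEq
    exact (spec p).2.2.2.1 (congrArg (fun q : T => q.1.parts) hEq)
  -- parity via fixed-point-free involution
  let g : Function.End T := f
  have hg2 : g ^ (2 ^ 1) = 1 := by
    have h2 : (2:ℕ) ^ 1 = 2 := rfl
    rw [h2, sq]
    funext p
    show g (g p) = p
    exact hff p
  have hmod := Equiv.Perm.card_fixedPoints_modEq (α := T) (p := 2) (n := 1) hg2
  have hempty : IsEmpty ↥(Function.fixedPoints g) := by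
    constructor
    rintro ⟨p, hp⟩
    exact hne p hp
  have hzero : Fintype.card ↥(Function.fixedPoints g) = 0 :=
    Fintype.card_eq_zero
  have hcard : pond (3 * n + 2) = Fintype.card T := by
    rw [pond, Nat.card_eq_fintype_card]
  rw [hcard]
  calc Fintype.card T ≡ Fintype.card ↥(Function.fixedPoints g) [MOD 2] := hmod
    _ = 0 := hzero
end

section
/- In the ring of formal power series ℤ[[q]], the generating function of pend satisfies (∑_{n≥0} pend(n) q^n) · f₁ · f₄ · f₆ = f₂ · f₁₂; equivalently, ∑_{n≥0} pend(n) q^n = (f₂ f₁₂)/(f₁ f₄ f₆). -/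
/-- A PEND partition of `n` is a partition of `n` in which no even part appears
exactly once, i.e. every even part that appears occurs with multiplicity at
least 2.  `pend n` counts the PEND partitions of `n` (with `pend 0 = 1`). -/
noncomputable def pend (n : ℕ) : ℕ :=
  Nat.card {p : n.Partition // ∀ k ∈ p.parts, Even k → 2 ≤ p.parts.count k}

/-- The `q`-adic limit of the partial products of a sequence of formal power
series whose factors tend to `1` `q`-adically, such as `g k = 1 - q ^ (r*(k+1))`:
since `g k = 1 + O(q ^ (k + 1))`, the coefficient of `q ^ n` in the partial products
`∏_{k < N} g k` stabilizes as soon as `N ≥ n + 1`, and the value below is the limit,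
in the `q`-adic topology on `ℤ[[q]]`, of the partial products, i.e. the convergent
infinite product `∏_{k ≥ 0} g k`. -/
noncomputable def qProd (g : ℕ → PowerSeries ℤ) : PowerSeries ℤ :=
  PowerSeries.mk fun n => PowerSeries.coeff (R := ℤ) n (∏ k ∈ Finset.range (n + 1), g k)

/-- `f r = (q^r; q^r)_∞ = ∏_{k ≥ 1} (1 - q ^ (r * k))` in `ℤ[[q]]`. -/
noncomputable def f (r : ℕ) : PowerSeries ℤ :=
  qProd fun k => 1 - (PowerSeries.X : PowerSeries ℤ) ^ (r * (k + 1))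

namespace PendAux

open PowerSeries

noncomputable section

variable {α : Type*}

open Finset

open scoped Classical

open Finset.HasAntidiagonal

def indicatorSeries (α : Type*) [Semiring α] (s : Set ℕ) : PowerSeries α :=
  PowerSeries.mk fun n => if n ∈ s then 1 else 0

theorem coeff_indicator (s : Set ℕ) [Semiring α] (n : ℕ) :
    coeff (R := α) n (indicatorSeries _ s) = if n ∈ s then 1 else 0 :=
  coeff_mk _ _

theorem coeff_indicator_pos (s : Set ℕ) [Semiring α] (n : ℕ) (h : n ∈ s) :
    coeff (R := α) n (indicatorSeries _ s) = 1 := by rw [coeff_indicator, if_pos h]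

theorem coeff_indicator_neg (s : Set ℕ) [Semiring α] (n : ℕ) (h : n ∉ s) :
    coeff (R := α) n (indicatorSeries _ s) = 0 := by rw [coeff_indicator, if_neg h]

theorem constantCoeff_indicator (s : Set ℕ) [Semiring α] :
    constantCoeff (R := α) (indicatorSeries _ s) = if 0 ∈ s then 1 else 0 :=
  rfl

theorem two_series (i : ℕ) [Semiring α] :
    1 + (X : PowerSeries α) ^ i.succ = indicatorSeries α {0, i.succ} := by
  ext n
  simp only [coeff_indicator, coeff_one, coeff_X_pow, Set.mem_insert_iff, Set.mem_singleton_iff,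
    map_add]
  cases' n with d
  · simp [(Nat.succ_ne_zero i).symm]
  · simp [Nat.succ_ne_zero d]

theorem num_series' [Field α] (i : ℕ) :
    (1 - (X : PowerSeries α) ^ (i + 1))⁻¹ = indicatorSeries α {k | i + 1 ∣ k} := by
  rw [PowerSeries.inv_eq_iff_mul_eq_one]
  · ext n
    cases n with
    | zero => simp [mul_sub, zero_pow, constantCoeff_indicator]
    | succ n =>
      simp only [coeff_one, if_false, mul_sub, mul_one, coeff_indicator,
        LinearMap.map_sub, reduceCtorEq]
      simp_rw [coeff_mul, coeff_X_pow, coeff_indicator, @boole_mul _ _ _ _]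
      erw [@sum_ite _ _ _ _ _ (fun _ => Classical.propDecidable _), sum_ite]
      simp_rw [@filter_filter _ _ _ _ _, sum_const_zero, add_zero, sum_const, nsmul_eq_mul, mul_one,
        sub_eq_iff_eq_add, zero_add]
      symm
      split_ifs with h
      · suffices #{a ∈ antidiagonal (n + 1) | i + 1 ∣ a.fst ∧ a.snd = i + 1} = 1 by
          simp only [Set.mem_setOf_eq]; convert congr_arg ((↑) : ℕ → α) this; norm_cast
        rw [card_eq_one]
        cases' h with p hp
        refine ⟨((i + 1) * (p - 1), i + 1), ?_⟩
        ext ⟨a₁, a₂⟩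
        simp only [mem_filter, Prod.mk.injEq, Finset.HasAntidiagonal.mem_antidiagonal, mem_singleton]
        constructor
        · rintro ⟨a_left, ⟨a, rfl⟩, rfl⟩
          refine ⟨?_, rfl⟩
          rw [Nat.mul_sub_left_distrib, ← hp, ← a_left, mul_one, Nat.add_sub_cancel]
        · rintro ⟨rfl, rfl⟩
          match p with
          | 0 => rw [mul_zero] at hp; cases hp
          | p + 1 => rw [hp]; simp [mul_add]
      · suffices #{a ∈ antidiagonal (n + 1) | i + 1 ∣ a.fst ∧ a.snd = i + 1} = 0 by
          simp only [Set.mem_setOf_eq]; convert congr_arg ((↑) : ℕ → α) this; norm_cast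
        rw [card_eq_zero]
        apply eq_empty_of_forall_notMem
        simp only [Prod.forall, mem_filter, not_and, Finset.HasAntidiagonal.mem_antidiagonal]
        rintro _ h₁ h₂ ⟨a, rfl⟩ rfl
        apply h
        simp [← h₂]
  · simp [zero_pow]

def mkOdd : ℕ ↪ ℕ :=
  ⟨fun i => 2 * i + 1, fun x y h => by linarith⟩

-- The main workhorse of the partition theorem proof.
theorem partialGF_prop (α : Type*) [CommSemiring α] (n : ℕ) (s : Finset ℕ) (hs : ∀ i ∈ s, 0 < i)
    (c : ℕ → Set ℕ) (hc : ∀ i, i ∉ s → 0 ∈ c i) :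
    #{p : n.Partition | (∀ j, p.parts.count j ∈ c j) ∧ ∀ j ∈ p.parts, j ∈ s} =
      coeff (R := α) n (∏ i ∈ s, indicatorSeries α ((· * i) '' c i)) := by
  simp_rw [coeff_prod, coeff_indicator, prod_boole, sum_boole]
  apply congr_arg
  simp only [mem_univ, forall_true_left, not_and, not_forall, exists_prop,
    Set.mem_image, not_exists]
  set φ : (a : Nat.Partition n) →
    a ∈ filter (fun p ↦ (∀ (j : ℕ), Multiset.count j p.parts ∈ c j) ∧ ∀ j ∈ p.parts, j ∈ s) univ →
    ℕ →₀ ℕ := fun p _ => {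
      toFun := fun i => Multiset.count i p.parts • i
      support := Finset.filter (fun i => i ≠ 0) p.parts.toFinset
      mem_support_toFun := fun a => by
        simp only [smul_eq_mul, ne_eq, mul_eq_zero, Multiset.count_eq_zero]
        rw [not_or, not_not]
        simp only [Multiset.mem_toFinset, not_not, mem_filter] }
  refine Finset.card_bij φ ?_ ?_ ?_
  · intro a ha
    simp only [φ, not_forall, not_exists, not_and, exists_prop, mem_filter]
    rw [mem_finsuppAntidiag]
    dsimp only [ne_eq, smul_eq_mul, id_eq, eq_mpr_eq_cast, le_eq_subset, Finsupp.coe_mk]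
    simp only [mem_univ, forall_true_left, not_and, not_forall, exists_prop,
      mem_filter, true_and] at ha
    refine ⟨⟨?_, fun i ↦ ?_⟩, fun i _ ↦ ⟨a.parts.count i, ha.1 i, rfl⟩⟩
    · conv_rhs => simp [← a.parts_sum]
      rw [sum_multiset_count_of_subset _ s]
      · simp only [smul_eq_mul]
      · intro i
        simp only [Multiset.mem_toFinset, not_not, mem_filter]
        apply ha.2
    · simp only [ne_eq, Multiset.mem_toFinset, not_not, mem_filter, and_imp]
      exact fun hi _ ↦ ha.2 i hi
  · intro p₁ hp₁ p₂ hp₂ h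
    apply Nat.Partition.ext
    simp only [true_and, mem_univ, mem_filter] at hp₁ hp₂
    ext i
    simp only [φ, ne_eq, Multiset.mem_toFinset, not_not, smul_eq_mul, Finsupp.mk.injEq] at h
    by_cases hi : i = 0
    · rw [hi]
      rw [Multiset.count_eq_zero_of_notMem]
      · rw [Multiset.count_eq_zero_of_notMem]
        intro a; exact Nat.lt_irrefl 0 (hs 0 (hp₂.2 0 a))
      intro a; exact Nat.lt_irrefl 0 (hs 0 (hp₁.2 0 a))
    · rw [← mul_left_inj' hi]
      rw [funext_iff] at h
      exact h.2 i
  · simp only [φ, mem_filter, mem_finsuppAntidiag, mem_univ, exists_prop, true_and, and_assoc]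
    rintro f ⟨hf, hf₃, hf₄⟩
    have hf' : f ∈ finsuppAntidiag s n := mem_finsuppAntidiag.mpr ⟨hf, hf₃⟩
    simp only [mem_finsuppAntidiag] at hf'
    refine ⟨⟨∑ i ∈ s, Multiset.replicate (f i / i) i, ?_, ?_⟩, ?_, ?_, ?_⟩
    · intro i hi
      simp only [exists_prop, Multiset.mem_sum, mem_map, Function.Embedding.coeFn_mk] at hi
      rcases hi with ⟨t, ht, z⟩
      apply hs
      rwa [Multiset.eq_of_mem_replicate z]
    · simp_rw [Multiset.sum_sum, Multiset.sum_replicate, Nat.nsmul_eq_mul]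
      rw [← hf'.1]
      refine sum_congr rfl fun i hi => Nat.div_mul_cancel ?_
      rcases hf₄ i hi with ⟨w, _, hw₂⟩
      rw [← hw₂]
      exact dvd_mul_left _ _
    · intro i
      simp_rw [Multiset.count_sum', Multiset.count_replicate, sum_ite_eq']
      split_ifs with h
      · rcases hf₄ i h with ⟨w, hw₁, hw₂⟩
        rwa [← hw₂, Nat.mul_div_cancel _ (hs i h)]
      · exact hc _ h
    · intro i hi
      rw [Multiset.mem_sum] at hi
      rcases hi with ⟨j, hj₁, hj₂⟩
      rwa [Multiset.eq_of_mem_replicate hj₂]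
    · ext i
      simp_rw [Multiset.count_sum', Multiset.count_replicate, sum_ite_eq']
      simp only [ne_eq, Multiset.mem_toFinset, not_not, smul_eq_mul, ite_mul,
        zero_mul, Finsupp.coe_mk]
      split_ifs with h
      · apply Nat.div_mul_cancel
        rcases hf₄ i h with ⟨w, _, hw₂⟩
        apply Dvd.intro_left _ hw₂
      · apply symm
        rw [← Finsupp.notMem_support_iff]
        exact notMem_mono hf'.2 h


/-- Splitting a product over `range (2*m)` into even/odd indices. -/
theorem prod_range_two_mul' {M : Type*} [CommMonoid M] (h : ℕ → M) (m : ℕ) :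
    ∏ k ∈ range (2 * m), h k = (∏ j ∈ range m, h (2 * j)) * ∏ j ∈ range m, h (2 * j + 1) := by
  induction m with
  | zero => simp
  | succ m ih =>
    rw [Nat.mul_succ, prod_range_succ, prod_range_succ,
      prod_range_succ (fun j => h (2 * j)), prod_range_succ (fun j => h (2 * j + 1)), ih,
      mul_assoc, mul_mul_mul_comm]

theorem indicator_odd (j : ℕ) :
    indicatorSeries ℚ ((· * (j + 1)) '' Set.univ) = (1 - (X : PowerSeries ℚ) ^ (j + 1))⁻¹ := by
  rw [num_series']
  have hset : ((· * (j + 1)) '' Set.univ) = {k | (j + 1) ∣ k} := by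
    ext k
    simp only [Set.mem_image, Set.mem_univ, true_and, Set.mem_setOf_eq]
    constructor
    · rintro ⟨m, rfl⟩; exact Dvd.intro_left m rfl
    · rintro ⟨m, rfl⟩; exact ⟨m, mul_comm _ _⟩
  rw [hset]

theorem indicator_even (j : ℕ) :
    indicatorSeries ℚ ((· * (j + 1)) '' {k | k ≠ 1}) =
      (1 - (X : PowerSeries ℚ) ^ (j + 1))⁻¹ - X ^ (j + 1) := by
  rw [num_series']
  ext n
  simp only [map_sub, coeff_indicator, coeff_X_pow, Set.mem_image, Set.mem_setOf_eq]
  have hiff : (∃ m, m ≠ 1 ∧ m * (j + 1) = n) ↔ ((j + 1) ∣ n ∧ n ≠ j + 1) := by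
    constructor
    · rintro ⟨m, hm, rfl⟩
      refine ⟨Dvd.intro_left m rfl, fun h => hm ?_⟩
      have : m * (j + 1) = 1 * (j + 1) := by rw [h, one_mul]
      exact Nat.eq_of_mul_eq_mul_right (Nat.succ_pos j) this
    · rintro ⟨⟨m, rfl⟩, hne⟩
      refine ⟨m, fun h => hne ?_, mul_comm _ _⟩
      rw [h, mul_one]
  rw [show (∃ m, m ≠ 1 ∧ m * (j + 1) = n) ↔ ((j + 1) ∣ n ∧ n ≠ j + 1) from hiff]
  by_cases hC : n = j + 1
  · subst hC
    rw [if_neg (by simp), if_pos dvd_rfl, if_pos rfl]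
    norm_num
  · rw [if_neg hC, sub_zero]
    by_cases hB : (j + 1) ∣ n
    · rw [if_pos ⟨hB, hC⟩, if_pos hB]
    · rw [if_neg (fun h => hB h.1), if_neg hB]

/-- The per-factor identity for even parts: with `t = X^(j+1)`,
`((1-t)⁻¹ - t) * (1-t) * (1-t²) * (1-t³) = (1-t) * (1-t⁶)`. -/
theorem even_factor_identity (j : ℕ) :
    ((1 - (X : PowerSeries ℚ) ^ (j + 1))⁻¹ - X ^ (j + 1)) * (1 - X ^ (j + 1)) *
        (1 - (X ^ (j + 1)) ^ 2) * (1 - (X ^ (j + 1)) ^ 3) =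
      (1 - X ^ (j + 1)) * (1 - (X ^ (j + 1)) ^ 6) := by
  set t : PowerSeries ℚ := X ^ (j + 1) with ht
  have hc : constantCoeff (R := ℚ) (1 - t) ≠ 0 := by
    simp [ht, zero_pow]
  have h1 : (1 - t) * (1 - t)⁻¹ = 1 := PowerSeries.mul_inv_cancel _ hc
  have h2 : ((1 - t)⁻¹ - t) * (1 - t) * (1 - t ^ 2) * (1 - t ^ 3) =
      (1 - t) * (1 - t)⁻¹ * ((1 - t) * (1 + t) * (1 - t ^ 3)) -
        t * (1 - t) * (1 - t ^ 2) * (1 - t ^ 3) := by ring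
  rw [h2, h1, one_mul]
  ring

/-- Counting PEND partitions as a coefficient of a finite product of indicator series. -/
theorem pend_eq_coeff (k m : ℕ) (hk : k ≤ 2 * m) :
    (pend k : ℚ) = coeff (R := ℚ) k (∏ i ∈ (range (2 * m)).map ⟨Nat.succ, Nat.succ_injective⟩,
      indicatorSeries ℚ ((· * i) '' (if Even i then {a | a ≠ 1} else Set.univ))) := by
  rw [← partialGF_prop ℚ k ((range (2 * m)).map ⟨Nat.succ, Nat.succ_injective⟩)
      (fun i hi => by obtain ⟨a, -, rfl⟩ := mem_map.mp hi; exact Nat.succ_pos a)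
      (fun i => if Even i then {a | a ≠ 1} else Set.univ)
      (fun i _ => by split_ifs <;> simp)]
  norm_cast
  rw [pend, Nat.card_eq_fintype_card, Fintype.card_subtype]
  apply congrArg
  ext p
  simp only [mem_filter, mem_univ, true_and, mem_map, mem_range, Function.Embedding.coeFn_mk]
  constructor
  · intro h
    constructor
    · intro j
      split_ifs with hje
      · simp only [Set.mem_setOf_eq]
        by_cases hj : j ∈ p.parts
        · have := h j hj hje; omega
        · rw [Multiset.count_eq_zero_of_notMem hj]; omega
      · trivial
    · intro j hj
      have hpos : 0 < j := p.parts_pos hj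
      have hle : j ≤ k := by
        simpa [p.parts_sum] using Multiset.single_le_sum (fun _ _ => Nat.zero_le _) _ hj
      exact ⟨j - 1, by omega, by omega⟩
  · intro h j hj hje
    have h1 := h.1 j
    rw [if_pos hje] at h1
    simp only [Set.mem_setOf_eq] at h1
    have hpos : 0 < p.parts.count j := Multiset.count_pos.mpr hj
    omega

/-- Stabilization: the `k`-th coefficient of `f r` equals that of any sufficiently long
partial product. -/
theorem coeff_f_eq (r k N : ℕ) (hr : 0 < r) (hN : k + 1 ≤ N) :
    PowerSeries.coeff (R := ℤ) k (f r) =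
      PowerSeries.coeff (R := ℤ) k (∏ j ∈ range N, (1 - (X : PowerSeries ℤ) ^ (r * (j + 1)))) := by
  rw [f, qProd, coeff_mk, ← Finset.prod_range_mul_prod_Ico _ hN,
    coeff_mul_prod_one_sub_of_lt_order k (Finset.Ico (k + 1) N) _ (fun i => X ^ (r * (i + 1)))]
  intro i hi
  rw [order_X_pow]
  have h1 : k + 1 ≤ i := (Finset.mem_Ico.mp hi).1
  have : k < r * (i + 1) := by
    calc k < i + 1 := by omega
    _ ≤ r * (i + 1) := Nat.le_mul_of_pos_left _ hr
  exact_mod_cast this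

theorem dvd_sub_mul {R : Type*} [CommRing R] {d A A' B B' : R}
    (h1 : d ∣ A - A') (h2 : d ∣ B - B') : d ∣ A * B - A' * B' := by
  have h : A * B - A' * B' = (A - A') * B + A' * (B - B') := by ring
  rw [h]
  exact dvd_add (h1.mul_right _) (h2.mul_left _)

theorem coeff_eq_of_dvd {n : ℕ} {A B : PowerSeries ℚ}
    (h : (X : PowerSeries ℚ) ^ (n + 1) ∣ A - B) : coeff (R := ℚ) n A = coeff (R := ℚ) n B := by
  have h2 := PowerSeries.X_pow_dvd_iff.mp h n (Nat.lt_succ_self n)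
  rw [map_sub, sub_eq_zero] at h2
  exact h2

theorem dvd_of_coeff_eq {n : ℕ} {A B : PowerSeries ℚ}
    (h : ∀ k, k ≤ n → coeff (R := ℚ) k A = coeff (R := ℚ) k B) : (X : PowerSeries ℚ) ^ (n + 1) ∣ A - B :=
  PowerSeries.X_pow_dvd_iff.mpr fun m hm => by
    rw [map_sub, h m (Nat.lt_succ_iff.mp hm), sub_self]

/-- The exact finite-product identity underlying the PEND generating function. -/
theorem partial_identity (m : ℕ) :
    (∏ i ∈ (range (2 * m)).map ⟨Nat.succ, Nat.succ_injective⟩,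
        indicatorSeries ℚ ((· * i) '' (if Even i then {a | a ≠ 1} else Set.univ))) *
      (∏ j ∈ range (2 * m), (1 - (X : PowerSeries ℚ) ^ (1 * (j + 1)))) *
      (∏ j ∈ range m, (1 - (X : PowerSeries ℚ) ^ (4 * (j + 1)))) *
      (∏ j ∈ range m, (1 - (X : PowerSeries ℚ) ^ (6 * (j + 1)))) =
    (∏ j ∈ range m, (1 - (X : PowerSeries ℚ) ^ (2 * (j + 1)))) *
      (∏ j ∈ range m, (1 - (X : PowerSeries ℚ) ^ (12 * (j + 1)))) := by
  rw [prod_map]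
  simp only [Function.Embedding.coeFn_mk, Nat.succ_eq_add_one, one_mul]
  rw [prod_range_two_mul'
      (fun k => indicatorSeries ℚ ((· * (k + 1)) '' (if Even (k + 1) then {a | a ≠ 1}
        else Set.univ))) m,
    prod_range_two_mul' (fun k => (1 - (X : PowerSeries ℚ) ^ (k + 1))) m]
  have hodd : (∏ j ∈ range m, indicatorSeries ℚ ((· * (2 * j + 1)) ''
        (if Even (2 * j + 1) then {a | a ≠ 1} else Set.univ)))
      = ∏ j ∈ range m, (1 - (X : PowerSeries ℚ) ^ (2 * j + 1))⁻¹ := by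
    refine prod_congr rfl fun j _ => ?_
    rw [if_neg (by simp [Nat.even_add_one, Nat.even_mul])]
    exact indicator_odd (2 * j)
  have heven : (∏ j ∈ range m, indicatorSeries ℚ ((· * (2 * j + 1 + 1)) ''
        (if Even (2 * j + 1 + 1) then {a | a ≠ 1} else Set.univ)))
      = ∏ j ∈ range m,
          ((1 - (X : PowerSeries ℚ) ^ (2 * j + 1 + 1))⁻¹ - X ^ (2 * j + 1 + 1)) := by
    refine prod_congr rfl fun j _ => ?_
    rw [if_pos (by refine ⟨j + 1, by ring⟩)]
    exact indicator_even (2 * j + 1)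
  rw [hodd, heven]
  have key1 : (∏ j ∈ range m, (1 - (X : PowerSeries ℚ) ^ (2 * j + 1))⁻¹) *
      (∏ j ∈ range m, (1 - (X : PowerSeries ℚ) ^ (2 * j + 1))) = 1 := by
    rw [← prod_mul_distrib]
    refine (prod_congr rfl fun j _ => ?_).trans prod_const_one
    rw [mul_comm]
    exact PowerSeries.mul_inv_cancel _ (by simp [zero_pow])
  have key2 : (∏ j ∈ range m,
        ((1 - (X : PowerSeries ℚ) ^ (2 * j + 1 + 1))⁻¹ - X ^ (2 * j + 1 + 1))) *
      (∏ j ∈ range m, (1 - (X : PowerSeries ℚ) ^ (2 * j + 1 + 1))) *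
      (∏ j ∈ range m, (1 - (X : PowerSeries ℚ) ^ (4 * (j + 1)))) *
      (∏ j ∈ range m, (1 - (X : PowerSeries ℚ) ^ (6 * (j + 1)))) =
      (∏ j ∈ range m, (1 - (X : PowerSeries ℚ) ^ (2 * (j + 1)))) *
        (∏ j ∈ range m, (1 - (X : PowerSeries ℚ) ^ (12 * (j + 1)))) := by
    rw [← prod_mul_distrib, ← prod_mul_distrib, ← prod_mul_distrib, ← prod_mul_distrib]
    refine prod_congr rfl fun j _ => ?_
    have e2 : (X : PowerSeries ℚ) ^ (2 * (j + 1)) = X ^ (2 * j + 1 + 1) := by congr 1 <;> ring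
    have e4 : (X : PowerSeries ℚ) ^ (4 * (j + 1)) = (X ^ (2 * j + 1 + 1)) ^ 2 := by
      rw [← pow_mul]; congr 1 <;> ring
    have e6 : (X : PowerSeries ℚ) ^ (6 * (j + 1)) = (X ^ (2 * j + 1 + 1)) ^ 3 := by
      rw [← pow_mul]; congr 1 <;> ring
    have e12 : (X : PowerSeries ℚ) ^ (12 * (j + 1)) = (X ^ (2 * j + 1 + 1)) ^ 6 := by
      rw [← pow_mul]; congr 1 <;> ring
    rw [e4, e6, e12, e2]
    exact even_factor_identity (2 * j + 1)
  linear_combination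
    ((∏ j ∈ range m, ((1 - (X : PowerSeries ℚ) ^ (2 * j + 1 + 1))⁻¹ - X ^ (2 * j + 1 + 1))) *
      (∏ j ∈ range m, (1 - (X : PowerSeries ℚ) ^ (2 * j + 1 + 1))) *
      (∏ j ∈ range m, (1 - (X : PowerSeries ℚ) ^ (4 * (j + 1)))) *
      (∏ j ∈ range m, (1 - (X : PowerSeries ℚ) ^ (6 * (j + 1))))) * key1 + key2
end

end PendAux

open Finset in
/-- The generating function of PEND partitions:
`∑_{n≥0} pend(n) qⁿ = f₂ f₁₂ / (f₁ f₄ f₆)` in `ℤ[[q]]`. -/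
theorem pend_generating_function :
    (PowerSeries.mk fun n => (pend n : ℤ)) * f 1 * f 4 * f 6 = f 2 * f 12 := by
  have hinj : Function.Injective (PowerSeries.map (Int.castRingHom ℚ) :
      PowerSeries ℤ → PowerSeries ℚ) := by
    intro a b h
    ext k
    have hk := congrArg (PowerSeries.coeff (R := ℚ) k) h
    rw [PowerSeries.coeff_map, PowerSeries.coeff_map] at hk
    exact Int.cast_injective (α := ℚ) hk
  apply hinj
  rw [map_mul, map_mul, map_mul, map_mul]
  ext n
  have hmap : ∀ (r N : ℕ), 0 < r → n + 1 ≤ N →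
      (PowerSeries.X : PowerSeries ℚ) ^ (n + 1) ∣
        PowerSeries.map (Int.castRingHom ℚ) (f r) -
          ∏ j ∈ range N, (1 - (PowerSeries.X : PowerSeries ℚ) ^ (r * (j + 1))) := by
    intro r N hr hN
    apply PendAux.dvd_of_coeff_eq
    intro k hk
    rw [PowerSeries.coeff_map, PendAux.coeff_f_eq r k N hr (by omega)]
    rw [← PowerSeries.coeff_map]
    congr 1
    rw [map_prod]
    refine Finset.prod_congr rfl fun j _ => ?_
    simp [map_sub, map_pow, PowerSeries.map_X]
  have h0 : (PowerSeries.X : PowerSeries ℚ) ^ (n + 1) ∣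
      PowerSeries.map (Int.castRingHom ℚ) (PowerSeries.mk fun n => (pend n : ℤ)) -
        ∏ i ∈ (range (2 * (n + 1))).map ⟨Nat.succ, Nat.succ_injective⟩,
          PendAux.indicatorSeries ℚ ((· * i) '' (if Even i then {a | a ≠ 1} else Set.univ)) := by
    apply PendAux.dvd_of_coeff_eq
    intro k hk
    rw [PowerSeries.coeff_map, PowerSeries.coeff_mk]
    have h := PendAux.pend_eq_coeff k (n + 1) (by omega)
    rw [← h]
    push_cast
    rfl
  have h1 := hmap 1 (2 * (n + 1)) one_pos (by omega)
  have h4 := hmap 4 (n + 1) (by norm_num) le_rfl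
  have h6 := hmap 6 (n + 1) (by norm_num) le_rfl
  have h2 := hmap 2 (n + 1) (by norm_num) le_rfl
  have h12 := hmap 12 (n + 1) (by norm_num) le_rfl
  have hL := PendAux.dvd_sub_mul (PendAux.dvd_sub_mul (PendAux.dvd_sub_mul h0 h1) h4) h6
  have hR := PendAux.dvd_sub_mul h2 h12
  rw [PendAux.coeff_eq_of_dvd hL, PendAux.coeff_eq_of_dvd hR, PendAux.partial_identity (n + 1)]

-- #print axioms pend_generating_function
end

section
/- In the ring of formal power series ℤ[[q]], the generating function of pond satisfies (∑_{n≥0} pond(n) q^n) · f₂² · f₃ · f₁₂ = f₄ · f₆²; equivalently, ∑_{n≥0} pond(n) q^n = (f₄ f₆²)/(f₂² f₃ f₁₂). -/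
open PowerSeries Finset

noncomputable section

/-- Sequences of power series that tend to 1 q-adically fast enough. -/
def Tame (g : ℕ → PowerSeries ℤ) : Prop :=
  ∀ k, (X : PowerSeries ℤ) ^ (k + 1) ∣ g k - 1

lemma coeff_eq_of_dvd_sub {n : ℕ} {u v : PowerSeries ℤ}
    (h : (X : PowerSeries ℤ) ^ (n + 1) ∣ u - v) :
    PowerSeries.coeff (R := ℤ) n u = PowerSeries.coeff (R := ℤ) n v := by
  have := (PowerSeries.X_pow_dvd_iff.mp h) n (Nat.lt_succ_self n)
  rw [map_sub, sub_eq_zero] at this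
  exact this

lemma prod_sub_one_dvd {s : Finset ℕ} {g : ℕ → PowerSeries ℤ} {d : PowerSeries ℤ}
    (h : ∀ k ∈ s, d ∣ g k - 1) : d ∣ (∏ k ∈ s, g k) - 1 := by
  classical
  induction s using Finset.induction with
  | empty => simp
  | @insert a s' ha ih =>
    rw [Finset.prod_insert ha]
    have h1 : d ∣ g a - 1 := h a (Finset.mem_insert_self a s')
    have h2 : d ∣ (∏ k ∈ s', g k) - 1 := ih fun k hk => h k (Finset.mem_insert_of_mem hk)
    have : g a * (∏ k ∈ s', g k) - 1
        = g a * ((∏ k ∈ s', g k) - 1) + (g a - 1) := by ring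
    rw [this]
    exact dvd_add (Dvd.dvd.mul_left h2 _) h1

lemma coeff_qProd (g : ℕ → PowerSeries ℤ) (n : ℕ) :
    PowerSeries.coeff (R := ℤ) n (qProd g)
      = PowerSeries.coeff (R := ℤ) n (∏ k ∈ Finset.range (n + 1), g k) :=
  PowerSeries.coeff_mk _ _

lemma stabilize {g : ℕ → PowerSeries ℤ} (hg : Tame g) {n N : ℕ} (hN : n + 1 ≤ N) :
    PowerSeries.coeff (R := ℤ) n (∏ k ∈ Finset.range N, g k)
      = PowerSeries.coeff (R := ℤ) n (qProd g) := by
  rw [coeff_qProd]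
  apply coeff_eq_of_dvd_sub
  have hsub : Finset.range (n+1) ⊆ Finset.range N := Finset.range_subset_range.mpr hN
  rw [← Finset.prod_sdiff hsub]
  have hd : (X : PowerSeries ℤ) ^ (n + 1)
      ∣ (∏ k ∈ Finset.range N \ Finset.range (n+1), g k) - 1 := by
    apply prod_sub_one_dvd
    intro k hk
    rw [Finset.mem_sdiff, Finset.mem_range, Finset.mem_range] at hk
    have : n + 1 ≤ k + 1 := by omega
    exact dvd_trans (pow_dvd_pow _ this) (hg k)
  have : (∏ k ∈ Finset.range N \ Finset.range (n+1), g k) * (∏ k ∈ Finset.range (n+1), g k)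
        - (∏ k ∈ Finset.range (n+1), g k)
      = (∏ k ∈ Finset.range (n+1), g k)
        * ((∏ k ∈ Finset.range N \ Finset.range (n+1), g k) - 1) := by ring
  rw [this]
  exact Dvd.dvd.mul_left hd _

lemma qProd_mul {g h : ℕ → PowerSeries ℤ} (hg : Tame g) (hh : Tame h) :
    qProd g * qProd h = qProd fun k => g k * h k := by
  ext n
  rw [PowerSeries.coeff_mul, coeff_qProd]
  rw [show (∏ k ∈ Finset.range (n+1), (g k * h k))
      = (∏ k ∈ Finset.range (n+1), g k) * (∏ k ∈ Finset.range (n+1), h k) from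
    Finset.prod_mul_distrib]
  rw [PowerSeries.coeff_mul]
  apply Finset.sum_congr rfl
  intro p hp
  rw [Finset.HasAntidiagonal.mem_antidiagonal] at hp
  rw [stabilize hg (by omega : p.1 + 1 ≤ n + 1), stabilize hh (by omega : p.2 + 1 ≤ n + 1)]

lemma tame_mul {g h : ℕ → PowerSeries ℤ} (hg : Tame g) (hh : Tame h) :
    Tame fun k => g k * h k := by
  intro k
  have : g k * h k - 1 = (g k - 1) * h k + (h k - 1) := by ring
  rw [this]
  exact dvd_add (Dvd.dvd.mul_right (hg k) _) (hh k)

lemma tame_one_sub_X_pow (e : ℕ → ℕ) (he : ∀ k, k + 1 ≤ e k) :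
    Tame fun k => 1 - (X : PowerSeries ℤ) ^ (e k) := by
  intro k
  have : (1 - (X : PowerSeries ℤ) ^ (e k)) - 1 = -(X ^ (e k)) := by ring
  rw [this, dvd_neg]
  exact pow_dvd_pow _ (he k)

end



open PowerSeries Finset

noncomputable section

/-- number of indices `k` with `e k = m`; since we always assume `k + 1 ≤ e k`,
it suffices to search in `range m`. -/
def cntE (e : ℕ → ℕ) (m : ℕ) : ℕ := ((Finset.range m).filter fun k => e k = m).card

lemma key_normal (e : ℕ → ℕ) (he : ∀ k, k + 1 ≤ e k) (n : ℕ) :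
    (X : PowerSeries ℤ) ^ (n + 1)
      ∣ (∏ k ∈ Finset.range (n+1), (1 - (X : PowerSeries ℤ) ^ (e k)))
        - ∏ m ∈ Finset.range (n+1), (1 - (X : PowerSeries ℤ) ^ m) ^ (cntE e m) := by
  classical
  set P : PowerSeries ℤ := ∏ k ∈ (Finset.range (n+1)).filter (fun k => e k ≤ n),
      (1 - (X : PowerSeries ℤ) ^ (e k)) with hP
  set Q : PowerSeries ℤ := ∏ k ∈ (Finset.range (n+1)).filter (fun k => ¬ e k ≤ n),
      (1 - (X : PowerSeries ℤ) ^ (e k)) with hQ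
  have hsplit : (∏ k ∈ Finset.range (n+1), (1 - (X : PowerSeries ℤ) ^ (e k))) = P * Q :=
    (Finset.prod_filter_mul_prod_filter_not _ _ _).symm
  have hPN : P = ∏ m ∈ Finset.range (n+1), (1 - (X : PowerSeries ℤ) ^ m) ^ (cntE e m) := by
    rw [hP]
    rw [← Finset.prod_fiberwise_of_maps_to (g := e) (t := Finset.range (n+1))
      (fun k hk => by
        rw [Finset.mem_filter] at hk
        exact Finset.mem_range.mpr (by omega))]
    apply Finset.prod_congr rfl
    intro m hm
    rw [Finset.mem_range] at hm
    have hfib : ((Finset.range (n+1)).filter (fun k => e k ≤ n)).filter (fun k => e k = m)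
        = (Finset.range m).filter (fun k => e k = m) := by
      ext k
      simp only [Finset.mem_filter, Finset.mem_range]
      constructor
      · rintro ⟨⟨-, -⟩, h2⟩
        exact ⟨by have := he k; omega, h2⟩
      · rintro ⟨h1, h2⟩
        exact ⟨⟨by omega, by omega⟩, h2⟩
    rw [hfib, cntE, ← Finset.prod_const]
    apply Finset.prod_congr rfl
    intro k hk
    rw [Finset.mem_filter] at hk
    rw [hk.2]
  have hQ1 : (X : PowerSeries ℤ) ^ (n + 1) ∣ Q - 1 := by
    apply prod_sub_one_dvd
    intro k hk
    rw [Finset.mem_filter] at hk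
    have : (1 - (X : PowerSeries ℤ) ^ (e k)) - 1 = -(X ^ (e k)) := by ring
    rw [this, dvd_neg]
    exact pow_dvd_pow _ (by omega)
  rw [hsplit, ← hPN]
  have : P * Q - P = P * (Q - 1) := by ring
  rw [this]
  exact Dvd.dvd.mul_left hQ1 _

/-- Master rearrangement lemma: two infinite products of factors
`(1 - X^{e₁ k})(1 - X^{e₂ k})` agree as soon as the multiplicity of every
exponent agrees. -/
lemma master (e1 e2 e1' e2' : ℕ → ℕ)
    (h1 : ∀ k, k + 1 ≤ e1 k) (h2 : ∀ k, k + 1 ≤ e2 k)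
    (h1' : ∀ k, k + 1 ≤ e1' k) (h2' : ∀ k, k + 1 ≤ e2' k)
    (hcount : ∀ m, cntE e1 m + cntE e2 m = cntE e1' m + cntE e2' m) :
    (qProd fun k => (1 - (X : PowerSeries ℤ) ^ (e1 k)) * (1 - (X : PowerSeries ℤ) ^ (e2 k)))
      = qProd fun k =>
        (1 - (X : PowerSeries ℤ) ^ (e1' k)) * (1 - (X : PowerSeries ℤ) ^ (e2' k)) := by
  ext n
  rw [coeff_qProd, coeff_qProd]
  have key : ∀ (a b : ℕ → ℕ), (∀ k, k + 1 ≤ a k) → (∀ k, k + 1 ≤ b k) →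
      (X : PowerSeries ℤ) ^ (n + 1)
        ∣ (∏ k ∈ Finset.range (n+1),
            ((1 - (X : PowerSeries ℤ) ^ (a k)) * (1 - (X : PowerSeries ℤ) ^ (b k))))
          - ∏ m ∈ Finset.range (n+1),
              (1 - (X : PowerSeries ℤ) ^ m) ^ (cntE a m + cntE b m) := by
    intro a b ha hb
    rw [Finset.prod_mul_distrib]
    have hA := key_normal a ha n
    have hB := key_normal b hb n
    set PA := ∏ k ∈ Finset.range (n+1), (1 - (X : PowerSeries ℤ) ^ (a k))
    set PB := ∏ k ∈ Finset.range (n+1), (1 - (X : PowerSeries ℤ) ^ (b k))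
    set NA := ∏ m ∈ Finset.range (n+1), (1 - (X : PowerSeries ℤ) ^ m) ^ (cntE a m)
    set NB := ∏ m ∈ Finset.range (n+1), (1 - (X : PowerSeries ℤ) ^ m) ^ (cntE b m)
    have hNN : (∏ m ∈ Finset.range (n+1),
        (1 - (X : PowerSeries ℤ) ^ m) ^ (cntE a m + cntE b m)) = NA * NB := by
      rw [← Finset.prod_mul_distrib]
      exact Finset.prod_congr rfl fun m _ => pow_add _ _ _
    rw [hNN]
    have : PA * PB - NA * NB = (PA - NA) * PB + NA * (PB - NB) := by ring
    rw [this]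
    exact dvd_add (Dvd.dvd.mul_right hA _) (Dvd.dvd.mul_left hB _)
  have d1 := key e1 e2 h1 h2
  have d2 := key e1' e2' h1' h2'
  have hNeq : (∏ m ∈ Finset.range (n+1), (1 - (X : PowerSeries ℤ) ^ m) ^ (cntE e1 m + cntE e2 m))
      = ∏ m ∈ Finset.range (n+1), (1 - (X : PowerSeries ℤ) ^ m) ^ (cntE e1' m + cntE e2' m) :=
    Finset.prod_congr rfl fun m _ => by rw [hcount m]
  rw [hNeq] at d1
  apply coeff_eq_of_dvd_sub
  have hd := dvd_sub d1 d2
  have hring : ∀ (a b c : PowerSeries ℤ), a - c - (b - c) = a - b := fun a b c => by ring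
  rw [hring] at hd
  exact hd

end 

noncomputable section

lemma cntE_if (c : ℕ) (hc : 0 < c) (P : ℕ → Prop) [DecidablePred P] (m : ℕ) :
    ((Finset.range m).filter fun k => P k ∧ c * (k + 1) = m).card
      = if 0 < m ∧ c ∣ m ∧ P (m / c - 1) then 1 else 0 := by
  split_ifs with h
  · obtain ⟨hm, ⟨t, ht⟩, hP⟩ := h
    have ht1 : 1 ≤ t := by
      rcases Nat.eq_zero_or_pos t with h0 | h0
      · subst h0; omega
      · exact h0
    have hdiv : m / c = t := by rw [ht]; exact Nat.mul_div_cancel_left t hc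
    rw [Finset.card_eq_one]
    refine ⟨t - 1, ?_⟩
    ext k
    simp only [Finset.mem_filter, Finset.mem_range, Finset.mem_singleton]
    constructor
    · rintro ⟨hk, hPk, hck⟩
      have hkt : k + 1 = t := by
        have : c * (k + 1) = c * t := by rw [hck, ht]
        exact Nat.eq_of_mul_eq_mul_left hc this
      omega
    · rintro rfl
      have hk1 : t - 1 + 1 = t := by omega
      have htm : t ≤ m := by
        rw [ht]
        calc t = 1 * t := (one_mul t).symm
        _ ≤ c * t := Nat.mul_le_mul_right t hc
      refine ⟨by omega, ?_, ?_⟩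
      · rw [hdiv] at hP; exact hP
      · rw [hk1, ← ht]
  · rw [Finset.card_eq_zero, Finset.filter_eq_empty_iff]
    intro k hk
    rw [Finset.mem_range] at hk
    rintro ⟨hPk, hck⟩
    apply h
    refine ⟨by omega, ⟨k + 1, hck.symm⟩, ?_⟩
    have : m / c = k + 1 := by rw [← hck]; exact Nat.mul_div_cancel_left _ hc
    rw [this]
    simpa using hPk

lemma cntE_mul (c m : ℕ) (hc : 0 < c) :
    cntE (fun k => c * (k + 1)) m = if 0 < m ∧ c ∣ m then 1 else 0 := by
  have h := cntE_if c hc (fun _ => True) m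
  simp only [true_and, and_true] at h
  rw [cntE]
  exact h

lemma cntE_ite (c d : ℕ) (hc : 0 < c) (hd : 0 < d) (P : ℕ → Prop) [DecidablePred P] (m : ℕ) :
    cntE (fun k => if P k then c * (k + 1) else d * (k + 1)) m
      = (if 0 < m ∧ c ∣ m ∧ P (m / c - 1) then 1 else 0)
        + (if 0 < m ∧ d ∣ m ∧ ¬ P (m / d - 1) then 1 else 0) := by
  rw [cntE]
  have hsplit : ((Finset.range m).filter fun k => (if P k then c * (k + 1) else d * (k + 1)) = m)
      = ((Finset.range m).filter fun k => P k ∧ c * (k + 1) = m)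
        ∪ ((Finset.range m).filter fun k => (¬ P k) ∧ d * (k + 1) = m) := by
    rw [← Finset.filter_or]
    apply Finset.filter_congr
    intro k _
    by_cases h : P k <;> simp [h]
  have hdisj : Disjoint ((Finset.range m).filter fun k => P k ∧ c * (k + 1) = m)
      ((Finset.range m).filter fun k => (¬ P k) ∧ d * (k + 1) = m) := by
    rw [Finset.disjoint_left]
    intro k hk1 hk2
    rw [Finset.mem_filter] at hk1 hk2
    exact hk2.2.1 hk1.2.1
  rw [hsplit, Finset.card_union_of_disjoint hdisj, cntE_if c hc P m,
    cntE_if d hd (fun k => ¬ P k) m]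

/-- the exponents of the auxiliary product `A`. -/
def alphaE (k : ℕ) : ℕ := if Odd (k + 1) then 2 * (k + 1) else 1 * (k + 1)

/-- the exponents of the auxiliary product coming from `B * f 3`. -/
def betaE (k : ℕ) : ℕ := if Odd (k + 1) then 6 * (k + 1) else 3 * (k + 1)

lemma alphaE_ge (k : ℕ) : k + 1 ≤ alphaE k := by
  rw [alphaE]; split <;> omega

lemma betaE_ge (k : ℕ) : k + 1 ≤ betaE k := by
  rw [betaE]; split <;> omega

lemma masterI :
    (qProd fun k => (1 - (PowerSeries.X : PowerSeries ℤ) ^ (2 * (k + 1)))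
        * (1 - (PowerSeries.X : PowerSeries ℤ) ^ (2 * (k + 1))))
      = qProd fun k => (1 - (PowerSeries.X : PowerSeries ℤ) ^ (alphaE k))
        * (1 - (PowerSeries.X : PowerSeries ℤ) ^ (4 * (k + 1))) := by
  apply master
  · intro k; omega
  · intro k; omega
  · exact alphaE_ge
  · intro k; omega
  · intro m
    have ha : alphaE = fun k => if Odd (k + 1) then 2 * (k + 1) else 1 * (k + 1) := rfl
    rw [ha]
    rw [cntE_mul 2 m (by norm_num), cntE_mul 4 m (by norm_num),
      cntE_ite 2 1 (by norm_num) (by norm_num) (fun k => Odd (k + 1)) m]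
    simp only [Nat.odd_iff, Nat.one_dvd, one_mul, true_and, Nat.div_one]
    split_ifs <;> omega

lemma masterII :
    (qProd fun k => (1 - (PowerSeries.X : PowerSeries ℤ) ^ (betaE k))
        * (1 - (PowerSeries.X : PowerSeries ℤ) ^ (12 * (k + 1))))
      = qProd fun k => (1 - (PowerSeries.X : PowerSeries ℤ) ^ (6 * (k + 1)))
        * (1 - (PowerSeries.X : PowerSeries ℤ) ^ (6 * (k + 1))) := by
  apply master
  · exact betaE_ge
  · intro k; omega
  · intro k; omega
  · intro k; omega
  · intro m
    have hb : betaE = fun k => if Odd (k + 1) then 6 * (k + 1) else 3 * (k + 1) := rfl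
    rw [hb]
    rw [cntE_mul 6 m (by norm_num), cntE_mul 12 m (by norm_num),
      cntE_ite 6 3 (by norm_num) (by norm_num) (fun k => Odd (k + 1)) m]
    simp only [Nat.odd_iff]
    split_ifs <;> omega

end

noncomputable section PartitionSide

open Finset
open scoped Classical

variable {α : Type*}

/-- A convenience constructor for the power series whose coefficients indicate a subset. -/
def indicatorSeries (α : Type*) [Semiring α] (s : Set ℕ) : PowerSeries α :=
  PowerSeries.mk fun n => if n ∈ s then 1 else 0

theorem coeff_indicator (s : Set ℕ) [Semiring α] (n : ℕ) :
    coeff (R := α) n (indicatorSeries _ s) = if n ∈ s then 1 else 0 :=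
  coeff_mk _ _

theorem coeff_indicator_pos (s : Set ℕ) [Semiring α] (n : ℕ) (h : n ∈ s) :
    coeff (R := α) n (indicatorSeries _ s) = 1 := by rw [coeff_indicator, if_pos h]

theorem coeff_indicator_neg (s : Set ℕ) [Semiring α] (n : ℕ) (h : n ∉ s) :
    coeff (R := α) n (indicatorSeries _ s) = 0 := by rw [coeff_indicator, if_neg h]

theorem constantCoeff_indicator (s : Set ℕ) [Semiring α] :
    constantCoeff (R := α) (indicatorSeries _ s) = if 0 ∈ s then 1 else 0 :=
  rfl

theorem two_series (i : ℕ) [Semiring α] :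
    1 + (X : PowerSeries α) ^ i.succ = indicatorSeries α {0, i.succ} := by
  ext n
  simp only [coeff_indicator, coeff_one, coeff_X_pow, Set.mem_insert_iff, Set.mem_singleton_iff,
    map_add]
  cases' n with d
  · simp [(Nat.succ_ne_zero i).symm]
  · simp [Nat.succ_ne_zero d]

theorem num_series' [Field α] (i : ℕ) :
    (1 - (X : PowerSeries α) ^ (i + 1))⁻¹ = indicatorSeries α {k | i + 1 ∣ k} := by
  rw [PowerSeries.inv_eq_iff_mul_eq_one]
  · ext n
    cases n with
    | zero => simp [mul_sub, zero_pow, constantCoeff_indicator]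
    | succ n =>
      simp only [coeff_one, if_false, mul_sub, mul_one, coeff_indicator,
        LinearMap.map_sub, reduceCtorEq]
      simp_rw [coeff_mul, coeff_X_pow, coeff_indicator, @boole_mul _ _ _ _]
      erw [@sum_ite _ _ _ _ _ (fun _ => Classical.propDecidable _), sum_ite]
      simp_rw [@filter_filter _ _ _ _ _, sum_const_zero, add_zero, sum_const, nsmul_eq_mul, mul_one,
        sub_eq_iff_eq_add, zero_add]
      symm
      split_ifs with h
      · suffices #{a ∈ antidiagonal (n + 1) | i + 1 ∣ a.fst ∧ a.snd = i + 1} = 1 by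
          simp only [Set.mem_setOf_eq]; convert congr_arg ((↑) : ℕ → α) this; norm_cast
        rw [card_eq_one]
        cases' h with p hp
        refine ⟨((i + 1) * (p - 1), i + 1), ?_⟩
        ext ⟨a₁, a₂⟩
        simp only [mem_filter, Prod.mk.injEq, HasAntidiagonal.mem_antidiagonal, mem_singleton]
        constructor
        · rintro ⟨a_left, ⟨a, rfl⟩, rfl⟩
          refine ⟨?_, rfl⟩
          rw [Nat.mul_sub_left_distrib, ← hp, ← a_left, mul_one, Nat.add_sub_cancel]
        · rintro ⟨rfl, rfl⟩
          match p with
          | 0 => rw [mul_zero] at hp; cases hp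
          | p + 1 => rw [hp]; simp [mul_add]
      · suffices #{a ∈ antidiagonal (n + 1) | i + 1 ∣ a.fst ∧ a.snd = i + 1} = 0 by
          simp only [Set.mem_setOf_eq]; convert congr_arg ((↑) : ℕ → α) this; norm_cast
        rw [card_eq_zero]
        apply eq_empty_of_forall_notMem
        simp only [Prod.forall, mem_filter, not_and, HasAntidiagonal.mem_antidiagonal]
        rintro _ h₁ h₂ ⟨a, rfl⟩ rfl
        apply h
        simp [← h₂]
  · simp [zero_pow]

def mkOdd : ℕ ↪ ℕ :=
  ⟨fun i => 2 * i + 1, fun x y h => by linarith⟩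

-- The main workhorse of the partition theorem proof.
theorem partialGF_prop (α : Type*) [CommSemiring α] (n : ℕ) (s : Finset ℕ) (hs : ∀ i ∈ s, 0 < i)
    (c : ℕ → Set ℕ) (hc : ∀ i, i ∉ s → 0 ∈ c i) :
    #{p : n.Partition | (∀ j, p.parts.count j ∈ c j) ∧ ∀ j ∈ p.parts, j ∈ s} =
      coeff (R := α) n (∏ i ∈ s, indicatorSeries α ((· * i) '' c i)) := by
  simp_rw [coeff_prod, coeff_indicator, prod_boole, sum_boole]
  apply congr_arg
  simp only [mem_univ, forall_true_left, not_and, not_forall, exists_prop,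
    Set.mem_image, not_exists]
  set φ : (a : Nat.Partition n) →
    a ∈ filter (fun p ↦ (∀ (j : ℕ), Multiset.count j p.parts ∈ c j) ∧ ∀ j ∈ p.parts, j ∈ s) univ →
    ℕ →₀ ℕ := fun p _ => {
      toFun := fun i => Multiset.count i p.parts • i
      support := Finset.filter (fun i => i ≠ 0) p.parts.toFinset
      mem_support_toFun := fun a => by
        simp only [smul_eq_mul, ne_eq, mul_eq_zero, Multiset.count_eq_zero]
        rw [not_or, not_not]
        simp only [Multiset.mem_toFinset, not_not, mem_filter] }
  refine Finset.card_bij φ ?_ ?_ ?_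
  · intro a ha
    simp only [φ, not_forall, not_exists, not_and, exists_prop, mem_filter]
    rw [mem_finsuppAntidiag]
    dsimp only [ne_eq, smul_eq_mul, id_eq, eq_mpr_eq_cast, le_eq_subset, Finsupp.coe_mk]
    simp only [mem_univ, forall_true_left, not_and, not_forall, exists_prop,
      mem_filter, true_and] at ha
    refine ⟨⟨?_, fun i ↦ ?_⟩, fun i _ ↦ ⟨a.parts.count i, ha.1 i, rfl⟩⟩
    · conv_rhs => simp [← a.parts_sum]
      rw [sum_multiset_count_of_subset _ s]
      · simp only [smul_eq_mul]
      · intro i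
        simp only [Multiset.mem_toFinset, not_not, mem_filter]
        apply ha.2
    · simp only [ne_eq, Multiset.mem_toFinset, not_not, mem_filter, and_imp]
      exact fun hi _ ↦ ha.2 i hi
  · intro p₁ hp₁ p₂ hp₂ h
    apply Nat.Partition.ext
    simp only [true_and, mem_univ, mem_filter] at hp₁ hp₂
    ext i
    simp only [φ, ne_eq, Multiset.mem_toFinset, not_not, smul_eq_mul, Finsupp.mk.injEq] at h
    by_cases hi : i = 0
    · rw [hi]
      rw [Multiset.count_eq_zero_of_notMem]
      · rw [Multiset.count_eq_zero_of_notMem]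
        intro a; exact Nat.lt_irrefl 0 (hs 0 (hp₂.2 0 a))
      intro a; exact Nat.lt_irrefl 0 (hs 0 (hp₁.2 0 a))
    · rw [← mul_left_inj' hi]
      rw [funext_iff] at h
      exact h.2 i
  · simp only [φ, mem_filter, mem_finsuppAntidiag, mem_univ, exists_prop, true_and, and_assoc]
    rintro f ⟨hf, hf₃, hf₄⟩
    have hf' : f ∈ finsuppAntidiag s n := mem_finsuppAntidiag.mpr ⟨hf, hf₃⟩
    simp only [mem_finsuppAntidiag] at hf'
    refine ⟨⟨∑ i ∈ s, Multiset.replicate (f i / i) i, ?_, ?_⟩, ?_, ?_, ?_⟩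
    · intro i hi
      simp only [exists_prop, Multiset.mem_sum, mem_map, Function.Embedding.coeFn_mk] at hi
      rcases hi with ⟨t, ht, z⟩
      apply hs
      rwa [Multiset.eq_of_mem_replicate z]
    · simp_rw [Multiset.sum_sum, Multiset.sum_replicate, Nat.nsmul_eq_mul]
      rw [← hf'.1]
      refine sum_congr rfl fun i hi => Nat.div_mul_cancel ?_
      rcases hf₄ i hi with ⟨w, _, hw₂⟩
      rw [← hw₂]
      exact dvd_mul_left _ _
    · intro i
      simp_rw [Multiset.count_sum', Multiset.count_replicate, sum_ite_eq']
      split_ifs with h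
      · rcases hf₄ i h with ⟨w, hw₁, hw₂⟩
        rwa [← hw₂, Nat.mul_div_cancel _ (hs i h)]
      · exact hc _ h
    · intro i hi
      rw [Multiset.mem_sum] at hi
      rcases hi with ⟨j, hj₁, hj₂⟩
      rwa [Multiset.eq_of_mem_replicate hj₂]
    · ext i
      simp_rw [Multiset.count_sum', Multiset.count_replicate, sum_ite_eq']
      simp only [ne_eq, Multiset.mem_toFinset, not_not, smul_eq_mul, ite_mul,
        zero_mul, Finsupp.coe_mk]
      split_ifs with h
      · apply Nat.div_mul_cancel
        rcases hf₄ i h with ⟨w, _, hw₂⟩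
        apply Dvd.intro_left _ hw₂
      · apply symm
        rw [← Finsupp.notMem_support_iff]
        exact notMem_mono hf'.2 h


end PartitionSide

noncomputable section

open PowerSeries

/-- multiples of `j`, as a power series identity: `(∑_{j ∣ a} q^a)(1 - q^j) = 1`. -/
lemma indicator_dvd_mul (j : ℕ) (hj : 0 < j) :
    indicatorSeries ℤ {a | j ∣ a} * (1 - (X : PowerSeries ℤ) ^ j) = 1 := by
  ext n
  rw [mul_sub, mul_one, map_sub, coeff_indicator, PowerSeries.coeff_mul_X_pow',
    PowerSeries.coeff_one]
  simp only [coeff_indicator, Set.mem_setOf_eq]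
  by_cases h0 : n = 0
  · subst h0
    norm_num [Nat.le_zero, hj.ne']
  · by_cases hd : j ∣ n
    · have hjn : j ≤ n := Nat.le_of_dvd (by omega) hd
      have hsub : j ∣ n - j := Nat.dvd_sub hd dvd_rfl
      simp [hd, hjn, hsub, h0]
    · by_cases hjn : j ≤ n
      · have hns : ¬ j ∣ n - j := by
          intro hc
          apply hd
          have hn' : n = n - j + j := by omega
          rw [hn']
          exact Nat.dvd_add hc dvd_rfl
        simp [hd, hjn, hns, h0]
      · simp [hd, hjn, h0]

lemma indicator_ne (j : ℕ) :
    indicatorSeries ℤ {a | j ∣ a ∧ a ≠ j}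
      = indicatorSeries ℤ {a | j ∣ a} - (X : PowerSeries ℤ) ^ j := by
  ext n
  rw [map_sub, coeff_indicator, coeff_indicator, PowerSeries.coeff_X_pow]
  simp only [Set.mem_setOf_eq]
  by_cases h2 : n = j
  · subst h2
    simp
  · by_cases h1 : j ∣ n <;> simp [h1, h2]

lemma indicator_ne_mul (j : ℕ) (hj : 0 < j) :
    indicatorSeries ℤ {a | j ∣ a ∧ a ≠ j} * (1 - (X : PowerSeries ℤ) ^ (2 * j))
      = 1 + (X : PowerSeries ℤ) ^ (3 * j) := by
  have e1 : (X : PowerSeries ℤ) ^ j * X ^ j = X ^ (2 * j) := by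
    rw [← pow_add]; congr 1; ring
  have e2 : (X : PowerSeries ℤ) ^ j * X ^ (2 * j) = X ^ (3 * j) := by
    rw [← pow_add]; congr 1; ring
  have h2j : (1 : PowerSeries ℤ) - X ^ (2 * j)
      = (1 - X ^ j) * (1 + X ^ j) := by rw [← e1]; ring
  rw [indicator_ne j]
  have hmain : (indicatorSeries ℤ {a | j ∣ a} - (X : PowerSeries ℤ) ^ j) * (1 - X ^ (2 * j))
      = (indicatorSeries ℤ {a | j ∣ a} * (1 - X ^ j)) * (1 + X ^ j)
        - X ^ j * (1 - X ^ (2 * j)) := by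
    rw [h2j]; ring
  rw [hmain, indicator_dvd_mul j hj, one_mul]
  linear_combination e2

lemma image_mul_univ (j : ℕ) (_hj : 0 < j) :
    (· * j) '' (Set.univ : Set ℕ) = {a | j ∣ a} := by
  ext a
  simp only [Set.image_univ, Set.mem_range, Set.mem_setOf_eq]
  constructor
  · rintro ⟨m, rfl⟩; exact Dvd.intro_left m rfl
  · rintro ⟨t, rfl⟩; exact ⟨t, mul_comm t j⟩

lemma image_mul_ne_one (j : ℕ) (hj : 0 < j) :
    (· * j) '' {m : ℕ | m ≠ 1} = {a | j ∣ a ∧ a ≠ j} := by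
  ext a
  simp only [Set.mem_image, Set.mem_setOf_eq]
  constructor
  · rintro ⟨m, hm, rfl⟩
    refine ⟨Dvd.intro_left m rfl, ?_⟩
    intro hcon
    apply hm
    have : m * j = 1 * j := by rw [hcon, one_mul]
    exact Nat.eq_of_mul_eq_mul_right hj this
  · rintro ⟨⟨t, rfl⟩, hne⟩
    refine ⟨t, ?_, mul_comm t j⟩
    intro hcon
    apply hne
    rw [hcon, mul_one]

/-- The multiplicity constraint for POND partitions: an odd part may not occur exactly once. -/
def pcSet (j : ℕ) : Set ℕ := {m | Odd j → m ≠ 1}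

/-- The local factor of the POND generating function for parts equal to `k + 1`. -/
def gpF (k : ℕ) : PowerSeries ℤ := indicatorSeries ℤ ((· * (k + 1)) '' pcSet (k + 1))

/-- The local factor of the product `B`. -/
def bbF (k : ℕ) : PowerSeries ℤ :=
  if Odd (k + 1) then 1 + (X : PowerSeries ℤ) ^ (3 * (k + 1)) else 1

lemma gpF_eq_odd (k : ℕ) (h : Odd (k + 1)) :
    gpF k = indicatorSeries ℤ {a | (k + 1) ∣ a ∧ a ≠ (k + 1)} := by
  rw [gpF]
  have hpc : pcSet (k + 1) = {m : ℕ | m ≠ 1} := by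
    ext m; simp [pcSet, h]
  rw [hpc, image_mul_ne_one (k + 1) (by omega)]

lemma gpF_eq_even (k : ℕ) (h : ¬ Odd (k + 1)) :
    gpF k = indicatorSeries ℤ {a | (k + 1) ∣ a} := by
  rw [gpF]
  have hpc : pcSet (k + 1) = Set.univ := by
    ext m; simp [pcSet, h]
  rw [hpc, image_mul_univ (k + 1) (by omega)]

lemma gpF_mul (k : ℕ) :
    gpF k * (1 - (X : PowerSeries ℤ) ^ (alphaE k)) = bbF k := by
  by_cases h : Odd (k + 1)
  · rw [bbF, if_pos h, alphaE, if_pos h, gpF_eq_odd k h]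
    exact indicator_ne_mul (k + 1) (by omega)
  · rw [bbF, if_neg h, alphaE, if_neg h, one_mul, gpF_eq_even k h]
    exact indicator_dvd_mul (k + 1) (by omega)

lemma bbF_mul (k : ℕ) :
    bbF k * (1 - (X : PowerSeries ℤ) ^ (3 * (k + 1)))
      = 1 - (X : PowerSeries ℤ) ^ (betaE k) := by
  by_cases h : Odd (k + 1)
  · rw [bbF, if_pos h, betaE, if_pos h]
    have hx : (X : PowerSeries ℤ) ^ (3 * (k+1)) * X ^ (3 * (k+1)) = X ^ (6 * (k+1)) := by
      rw [← pow_add]; congr 1; ring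
    linear_combination -hx
  · rw [bbF, if_neg h, betaE, if_neg h, one_mul]

lemma tame_bbF : Tame bbF := by
  intro k
  rw [bbF]
  split
  · have : (1 + (X : PowerSeries ℤ) ^ (3 * (k + 1))) - 1 = X ^ (3 * (k + 1)) := by ring
    rw [this]
    exact pow_dvd_pow _ (by omega)
  · simp

lemma tame_gpF : Tame gpF := by
  intro k
  rw [PowerSeries.X_pow_dvd_iff]
  intro m hm
  rw [map_sub, gpF, coeff_indicator, PowerSeries.coeff_one]
  rcases Nat.eq_zero_or_pos m with rfl | hmpos
  · rw [if_pos, if_pos rfl]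
    · ring
    · exact ⟨0, fun _ => by omega, by simp⟩
  · rw [if_neg, if_neg (by omega)]
    · ring
    · rintro ⟨t, -, hteq⟩
      simp only at hteq
      rcases Nat.eq_zero_or_pos t with rfl | htpos
      · omega
      · have : k + 1 ≤ t * (k + 1) := by
          calc k + 1 = 1 * (k + 1) := (one_mul _).symm
          _ ≤ t * (k + 1) := Nat.mul_le_mul_right _ htpos
        omega

end

noncomputable section

open PowerSeries
open scoped Classical

lemma pond_coeff (n : ℕ) :
    ((pond n : ℤ)) = PowerSeries.coeff (R := ℤ) n (∏ k ∈ Finset.range (n + 1), gpF k) := by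
  set s : Finset ℕ := (Finset.range (n + 1)).map ⟨Nat.succ, Nat.succ_injective⟩ with hs_def
  have hs : ∀ i ∈ s, 0 < i := by
    intro i hi
    rw [hs_def, Finset.mem_map] at hi
    obtain ⟨a, -, rfl⟩ := hi
    exact Nat.succ_pos a
  have hc : ∀ i, i ∉ s → 0 ∈ pcSet i := fun i _ => fun _ => by omega
  have hprod : (∏ k ∈ Finset.range (n + 1), gpF k)
      = ∏ i ∈ s, indicatorSeries ℤ ((· * i) '' pcSet i) := by
    rw [hs_def, Finset.prod_map]
    rfl
  rw [hprod, ← partialGF_prop ℤ n s hs pcSet hc]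
  norm_cast
  rw [pond, Nat.card_eq_fintype_card, Fintype.card_subtype]
  congr 1
  apply Finset.filter_congr
  intro p _
  constructor
  · intro hp
    refine ⟨fun j => ?_, fun j hj => ?_⟩
    · simp only [pcSet, Set.mem_setOf_eq]
      intro hodd hone
      have hmem : j ∈ p.parts := Multiset.count_pos.mp (by omega)
      have := hp j hmem hodd
      omega
    · rw [hs_def, Finset.mem_map]
      have hj1 : 0 < j := p.parts_pos hj
      have hjn : j ≤ n := by
        have := Multiset.single_le_sum (fun x _ => Nat.zero_le x) j hj
        rwa [p.parts_sum] at this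
      exact ⟨j - 1, Finset.mem_range.mpr (by omega),
        by simp only [Function.Embedding.coeFn_mk]; omega⟩
  · rintro ⟨h1, h2⟩ k hk hodd
    have hh := h1 k
    simp only [pcSet, Set.mem_setOf_eq] at hh
    have hne := hh hodd
    have hpos : 0 < p.parts.count k := Multiset.count_pos.mpr hk
    omega

end

/-- The generating function of POND partitions:
`∑_{n≥0} pond(n) qⁿ = f₄ f₆² / (f₂² f₃ f₁₂)` in `ℤ[[q]]`. -/
theorem pond_generating_function :
    (PowerSeries.mk fun n => (pond n : ℤ)) * (f 2) ^ 2 * f 3 * f 12 = f 4 * (f 6) ^ 2 := by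
  have t2 : Tame (fun k => 1 - (PowerSeries.X : PowerSeries ℤ) ^ (2 * (k + 1))) :=
    tame_one_sub_X_pow _ (fun k => by omega)
  have t3 : Tame (fun k => 1 - (PowerSeries.X : PowerSeries ℤ) ^ (3 * (k + 1))) :=
    tame_one_sub_X_pow _ (fun k => by omega)
  have t4 : Tame (fun k => 1 - (PowerSeries.X : PowerSeries ℤ) ^ (4 * (k + 1))) :=
    tame_one_sub_X_pow _ (fun k => by omega)
  have t6 : Tame (fun k => 1 - (PowerSeries.X : PowerSeries ℤ) ^ (6 * (k + 1))) :=
    tame_one_sub_X_pow _ (fun k => by omega)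
  have t12 : Tame (fun k => 1 - (PowerSeries.X : PowerSeries ℤ) ^ (12 * (k + 1))) :=
    tame_one_sub_X_pow _ (fun k => by omega)
  have tA : Tame (fun k => 1 - (PowerSeries.X : PowerSeries ℤ) ^ (alphaE k)) :=
    tame_one_sub_X_pow _ alphaE_ge
  have tB : Tame (fun k => 1 - (PowerSeries.X : PowerSeries ℤ) ^ (betaE k)) :=
    tame_one_sub_X_pow _ betaE_ge
  have hpond : (PowerSeries.mk fun n => (pond n : ℤ)) = qProd gpF := by
    ext n
    rw [PowerSeries.coeff_mk, coeff_qProd]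
    exact pond_coeff n
  have h1 : (PowerSeries.mk fun n => (pond n : ℤ))
      * qProd (fun k => 1 - (PowerSeries.X : PowerSeries ℤ) ^ (alphaE k)) = qProd bbF := by
    rw [hpond, qProd_mul tame_gpF tA]
    exact congrArg qProd (funext fun k => gpF_mul k)
  have hI : f 2 * f 2
      = qProd (fun k => 1 - (PowerSeries.X : PowerSeries ℤ) ^ (alphaE k)) * f 4 := by
    have h2 : f 2 = qProd (fun k => 1 - (PowerSeries.X : PowerSeries ℤ) ^ (2 * (k + 1))) := rfl
    have h4 : f 4 = qProd (fun k => 1 - (PowerSeries.X : PowerSeries ℤ) ^ (4 * (k + 1))) := rfl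
    rw [h2, h4, qProd_mul t2 t2, qProd_mul tA t4, masterI]
  have hII : qProd bbF * f 3 * f 12 = f 6 * f 6 := by
    have h3 : f 3 = qProd (fun k => 1 - (PowerSeries.X : PowerSeries ℤ) ^ (3 * (k + 1))) := rfl
    have h6 : f 6 = qProd (fun k => 1 - (PowerSeries.X : PowerSeries ℤ) ^ (6 * (k + 1))) := rfl
    have h12 : f 12 = qProd (fun k => 1 - (PowerSeries.X : PowerSeries ℤ) ^ (12 * (k + 1))) := rfl
    have hb3 : qProd bbF * f 3
        = qProd (fun k => 1 - (PowerSeries.X : PowerSeries ℤ) ^ (betaE k)) := by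
      rw [h3, qProd_mul tame_bbF t3]
      exact congrArg qProd (funext fun k => bbF_mul k)
    rw [hb3, h6, h12, qProd_mul tB t12, masterII, ← qProd_mul t6 t6]
  linear_combination ((PowerSeries.mk fun n => (pond n : ℤ)) * f 3 * f 12) * hI
    + (f 4 * f 3 * f 12) * h1 + (f 4) * hII
end

section
/- In the ring of formal power series ℤ[[q]], ( ∑_{n≥0} (−1)^n pend(n) q^n ) · f₂² · f₆ = f₁ · f₁₂; equivalently, ∑_{n≥0} (−1)^n pend(n) q^n = (f₁ f₁₂)/(f₂² f₆). -/
open PowerSeries Finset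
open Finset.HasAntidiagonal
open scoped Classical


noncomputable section

namespace PendProof


variable {α : Type*}

/-- A convenience constructor for the power series whose coefficients indicate a subset. -/
def indicatorSeries (α : Type*) [Semiring α] (s : Set ℕ) : PowerSeries α :=
  PowerSeries.mk fun n => if n ∈ s then 1 else 0

theorem coeff_indicator (s : Set ℕ) [Semiring α] (n : ℕ) :
    coeff (R := α) n (indicatorSeries _ s) = if n ∈ s then 1 else 0 :=
  coeff_mk _ _

theorem coeff_indicator_pos (s : Set ℕ) [Semiring α] (n : ℕ) (h : n ∈ s) :
    coeff (R := α) n (indicatorSeries _ s) = 1 := by rw [coeff_indicator, if_pos h]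

theorem coeff_indicator_neg (s : Set ℕ) [Semiring α] (n : ℕ) (h : n ∉ s) :
    coeff (R := α) n (indicatorSeries _ s) = 0 := by rw [coeff_indicator, if_neg h]

theorem constantCoeff_indicator (s : Set ℕ) [Semiring α] :
    constantCoeff (R := α) (indicatorSeries _ s) = if 0 ∈ s then 1 else 0 :=
  rfl

theorem two_series (i : ℕ) [Semiring α] :
    1 + (X : PowerSeries α) ^ i.succ = indicatorSeries α {0, i.succ} := by
  ext n
  simp only [coeff_indicator, coeff_one, coeff_X_pow, Set.mem_insert_iff, Set.mem_singleton_iff,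
    map_add]
  cases' n with d
  · simp [(Nat.succ_ne_zero i).symm]
  · simp [Nat.succ_ne_zero d]
-- The main workhorse of the partition theorem proof.
theorem partialGF_prop (α : Type*) [CommSemiring α] (n : ℕ) (s : Finset ℕ) (hs : ∀ i ∈ s, 0 < i)
    (c : ℕ → Set ℕ) (hc : ∀ i, i ∉ s → 0 ∈ c i) :
    #{p : n.Partition | (∀ j, p.parts.count j ∈ c j) ∧ ∀ j ∈ p.parts, j ∈ s} =
      coeff (R := α) n (∏ i ∈ s, indicatorSeries α ((· * i) '' c i)) := by
  simp_rw [coeff_prod, coeff_indicator, prod_boole, sum_boole]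
  apply congr_arg
  simp only [mem_univ, forall_true_left, not_and, not_forall, exists_prop,
    Set.mem_image, not_exists]
  set φ : (a : Nat.Partition n) →
    a ∈ filter (fun p ↦ (∀ (j : ℕ), Multiset.count j p.parts ∈ c j) ∧ ∀ j ∈ p.parts, j ∈ s) univ →
    ℕ →₀ ℕ := fun p _ => {
      toFun := fun i => Multiset.count i p.parts • i
      support := Finset.filter (fun i => i ≠ 0) p.parts.toFinset
      mem_support_toFun := fun a => by
        simp only [smul_eq_mul, ne_eq, mul_eq_zero, Multiset.count_eq_zero]
        rw [not_or, not_not]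
        simp only [Multiset.mem_toFinset, not_not, mem_filter] }
  refine Finset.card_bij φ ?_ ?_ ?_
  · intro a ha
    simp only [φ, not_forall, not_exists, not_and, exists_prop, mem_filter]
    rw [mem_finsuppAntidiag]
    dsimp only [ne_eq, smul_eq_mul, id_eq, eq_mpr_eq_cast, le_eq_subset, Finsupp.coe_mk]
    simp only [mem_univ, forall_true_left, not_and, not_forall, exists_prop,
      mem_filter, true_and] at ha
    refine ⟨⟨?_, fun i ↦ ?_⟩, fun i _ ↦ ⟨a.parts.count i, ha.1 i, rfl⟩⟩
    · conv_rhs => simp [← a.parts_sum]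
      rw [sum_multiset_count_of_subset _ s]
      · simp only [smul_eq_mul]
      · intro i
        simp only [Multiset.mem_toFinset, not_not, mem_filter]
        apply ha.2
    · simp only [ne_eq, Multiset.mem_toFinset, not_not, mem_filter, and_imp]
      exact fun hi _ ↦ ha.2 i hi
  · intro p₁ hp₁ p₂ hp₂ h
    apply Nat.Partition.ext
    simp only [true_and, mem_univ, mem_filter] at hp₁ hp₂
    ext i
    simp only [φ, ne_eq, Multiset.mem_toFinset, not_not, smul_eq_mul, Finsupp.mk.injEq] at h
    by_cases hi : i = 0
    · rw [hi]
      rw [Multiset.count_eq_zero_of_notMem]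
      · rw [Multiset.count_eq_zero_of_notMem]
        intro a; exact Nat.lt_irrefl 0 (hs 0 (hp₂.2 0 a))
      intro a; exact Nat.lt_irrefl 0 (hs 0 (hp₁.2 0 a))
    · rw [← mul_left_inj' hi]
      rw [funext_iff] at h
      exact h.2 i
  · simp only [φ, mem_filter, mem_finsuppAntidiag, mem_univ, exists_prop, true_and, and_assoc]
    rintro f ⟨hf, hf₃, hf₄⟩
    have hf' : f ∈ finsuppAntidiag s n := mem_finsuppAntidiag.mpr ⟨hf, hf₃⟩
    simp only [mem_finsuppAntidiag] at hf'
    refine ⟨⟨∑ i ∈ s, Multiset.replicate (f i / i) i, ?_, ?_⟩, ?_, ?_, ?_⟩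
    · intro i hi
      simp only [exists_prop, Multiset.mem_sum, mem_map, Function.Embedding.coeFn_mk] at hi
      rcases hi with ⟨t, ht, z⟩
      apply hs
      rwa [Multiset.eq_of_mem_replicate z]
    · simp_rw [Multiset.sum_sum, Multiset.sum_replicate, Nat.nsmul_eq_mul]
      rw [← hf'.1]
      refine sum_congr rfl fun i hi => Nat.div_mul_cancel ?_
      rcases hf₄ i hi with ⟨w, _, hw₂⟩
      rw [← hw₂]
      exact dvd_mul_left _ _
    · intro i
      simp_rw [Multiset.count_sum', Multiset.count_replicate, sum_ite_eq']
      split_ifs with h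
      · rcases hf₄ i h with ⟨w, hw₁, hw₂⟩
        rwa [← hw₂, Nat.mul_div_cancel _ (hs i h)]
      · exact hc _ h
    · intro i hi
      rw [Multiset.mem_sum] at hi
      rcases hi with ⟨j, hj₁, hj₂⟩
      rwa [Multiset.eq_of_mem_replicate hj₂]
    · ext i
      simp_rw [Multiset.count_sum', Multiset.count_replicate, sum_ite_eq']
      simp only [ne_eq, Multiset.mem_toFinset, not_not, smul_eq_mul, ite_mul,
        zero_mul, Finsupp.coe_mk]
      split_ifs with h
      · apply Nat.div_mul_cancel
        rcases hf₄ i h with ⟨w, _, hw₂⟩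
        apply Dvd.intro_left _ hw₂
      · apply symm
        rw [← Finsupp.notMem_support_iff]
        exact notMem_mono hf'.2 h


/-- Allowed multiplicities for part `i` in a PEND partition. -/
def mults (i : ℕ) : Set ℕ := {m | Even i → m ≠ 1}

/-- The generating series for the allowed multiplicities of part `i`. -/
def B (i : ℕ) : PowerSeries ℤ := indicatorSeries ℤ ((· * i) '' mults i)

theorem pend_def' (n : ℕ) :
    pend n = Nat.card {p : n.Partition // ∀ k ∈ p.parts, Even k → 2 ≤ p.parts.count k} := rfl

theorem pend_eq (n N : ℕ) (hn : n ≤ N) :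
    (pend n : ℤ) =
      coeff (R := ℤ) n (∏ i ∈ (range N).map ⟨Nat.succ, Nat.succ_injective⟩, B i) := by
  set s : Finset ℕ := (range N).map ⟨Nat.succ, Nat.succ_injective⟩ with hs_def
  have hs : ∀ i ∈ s, 0 < i := by
    simp only [hs_def, mem_map, mem_range, Function.Embedding.coeFn_mk]
    rintro i ⟨a, -, rfl⟩
    exact Nat.succ_pos a
  have hc : ∀ i, i ∉ s → 0 ∈ mults i := fun i _ => by simp [mults]
  have hgf := partialGF_prop ℤ n s hs mults hc
  simp only [B]
  rw [← hgf]
  have key : ∀ p : n.Partition,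
      ((∀ j, p.parts.count j ∈ mults j) ∧ ∀ j ∈ p.parts, j ∈ s)
        ↔ (∀ k ∈ p.parts, Even k → 2 ≤ p.parts.count k) := by
    intro p
    constructor
    · rintro ⟨h1, -⟩ k hk hke
      have h2 : p.parts.count k ≠ 1 := h1 k hke
      have hpos : 0 < p.parts.count k := Multiset.count_pos.mpr hk
      omega
    · intro h
      refine ⟨fun j hje => ?_, fun j hj => ?_⟩
      · by_cases hjp : j ∈ p.parts
        · have := h j hjp hje; omega
        · rw [Multiset.count_eq_zero_of_notMem hjp]; omega
      · have h1 : 0 < j := p.parts_pos hj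
        have h2 : j ≤ n := by
          simpa [p.parts_sum] using Multiset.single_le_sum (fun _ _ => Nat.zero_le _) _ hj
        simp only [hs_def, mem_map, mem_range, Function.Embedding.coeFn_mk]
        exact ⟨j - 1, by omega, by omega⟩
  have hcard : pend n =
      #{p : n.Partition | (∀ j, p.parts.count j ∈ mults j) ∧ ∀ j ∈ p.parts, j ∈ s} := by
    rw [pend_def', Nat.card_eq_fintype_card, Fintype.card_subtype]
    apply Finset.card_bij (fun p _ => p) <;> simp_all [key]
  rw [hcard]


theorem one_sub_X_pow_mul_indicator (i : ℕ) (hi : 0 < i) :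
    (1 - (X : PowerSeries ℤ) ^ i) * indicatorSeries ℤ {k | i ∣ k} = 1 := by
  ext n
  rw [sub_mul, one_mul, map_sub, mul_comm, PowerSeries.coeff_mul_X_pow', coeff_indicator,
    coeff_one]
  simp only [coeff_indicator, Set.mem_setOf_eq]
  by_cases h1 : i ∣ n
  · obtain ⟨m, rfl⟩ := h1
    rcases Nat.eq_zero_or_pos m with rfl | hm
    · simp [hi.ne', Nat.lt_irrefl, hi]
    · have hle : i ≤ i * m := Nat.le_mul_of_pos_right i hm
      have hdvd : i ∣ i * m - i := Nat.dvd_sub (dvd_mul_right i m) dvd_rfl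
      have hne : i * m ≠ 0 := by positivity
      rw [if_pos (dvd_mul_right i m), if_pos hle, if_pos hdvd, if_neg hne]
      ring
  · have hn0 : n ≠ 0 := by rintro rfl; exact h1 (dvd_zero i)
    have h4 : i ≤ n → ¬ i ∣ n - i := fun hle hd => h1 (by
      have h5 := Nat.dvd_add hd (dvd_refl i)
      rwa [Nat.sub_add_cancel hle] at h5)
    rw [if_neg h1, if_neg hn0]
    split_ifs with h5 h6
    · exact absurd h6 (h4 h5)
    · ring
    · ring


theorem B_odd (i : ℕ) (h : ¬ Even i) : B i = indicatorSeries ℤ {k | i ∣ k} := by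
  have himg : (· * i) '' mults i = {k | i ∣ k} := by
    ext k
    simp only [Set.mem_image, mults, Set.mem_setOf_eq]
    constructor
    · rintro ⟨m, -, rfl⟩; exact Dvd.intro_left m rfl
    · rintro ⟨m, rfl⟩; exact ⟨m, fun he => absurd he h, mul_comm m i⟩
  rw [B, himg]

theorem B_even (i : ℕ) (he : Even i) (hi : 0 < i) :
    B i = indicatorSeries ℤ {k | i ∣ k} - X ^ i := by
  have himg : (· * i) '' mults i = {k | i ∣ k ∧ k ≠ i} := by
    ext k
    simp only [Set.mem_image, mults, Set.mem_setOf_eq]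
    constructor
    · rintro ⟨m, hm, rfl⟩
      refine ⟨Dvd.intro_left m rfl, fun hk => ?_⟩
      exact hm he (Nat.eq_of_mul_eq_mul_right hi (by rw [hk, one_mul]))
    · rintro ⟨⟨m, rfl⟩, hne⟩
      exact ⟨m, fun _ hm1 => hne (by rw [hm1, mul_one]), mul_comm m i⟩
  rw [B, himg]
  ext n
  rw [map_sub, coeff_indicator, coeff_indicator, coeff_X_pow]
  simp only [Set.mem_setOf_eq]
  by_cases hni : n = i
  · subst hni; simp
  · simp [hni]

theorem DB (i : ℕ) (hi : 0 < i) :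
    (if Even i then 1 - (X : PowerSeries ℤ) ^ (2*i) else 1 - X ^ i) * B i
      = (if Even i then 1 + (X : PowerSeries ℤ) ^ (3*i) else 1) := by
  by_cases he : Even i
  · rw [if_pos he, if_pos he, B_even i he hi]
    have h := one_sub_X_pow_mul_indicator i hi
    have h2 : (X : PowerSeries ℤ) ^ (2*i) = (X ^ i) ^ 2 := by rw [← pow_mul, mul_comm]
    have h3 : (X : PowerSeries ℤ) ^ (3*i) = (X ^ i) ^ 3 := by rw [← pow_mul, mul_comm]
    rw [h2, h3]
    linear_combination (1 + (X : PowerSeries ℤ) ^ i) * h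
  · rw [if_neg he, if_neg he, B_odd i he]
    exact one_sub_X_pow_mul_indicator i hi


/-- Finite truncation of `f r`. -/
def Fp (r N : ℕ) : PowerSeries ℤ := ∏ k ∈ range N, (1 - (X : PowerSeries ℤ) ^ (r * (k + 1)))

/-- Two power series agree in all coefficients up to `n`. -/
def TEq (n : ℕ) (A B : PowerSeries ℤ) : Prop := ∀ j ≤ n, coeff (R := ℤ) j A = coeff (R := ℤ) j B

theorem TEq.mul {n : ℕ} {A A' B B' : PowerSeries ℤ} (h : TEq n A A') (h' : TEq n B B') :
    TEq n (A * B) (A' * B') := by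
  intro j hj
  rw [coeff_mul, coeff_mul]
  refine Finset.sum_congr rfl ?_
  rintro ⟨p, q⟩ hpq
  rw [Finset.HasAntidiagonal.mem_antidiagonal] at hpq
  rw [h p (by omega), h' q (by omega)]

theorem coeff_prod_stable (e : ℕ → ℕ) (he : ∀ k, k + 1 ≤ e k) (n : ℕ) {N N' : ℕ}
    (h : n < N) (h' : n < N') :
    coeff (R := ℤ) n (∏ k ∈ range N, (1 - (X : PowerSeries ℤ) ^ e k)) =
      coeff (R := ℤ) n (∏ k ∈ range N', (1 - (X : PowerSeries ℤ) ^ e k)) := by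
  suffices H : ∀ N, n < N → coeff (R := ℤ) n (∏ k ∈ range N, (1 - (X : PowerSeries ℤ) ^ e k)) =
      coeff (R := ℤ) n (∏ k ∈ range (n + 1), (1 - (X : PowerSeries ℤ) ^ e k)) by
    rw [H N h, H N' h']
  intro N hN
  rw [← Finset.prod_range_mul_prod_Ico _ (by omega : n + 1 ≤ N)]
  rw [coeff_mul_prod_one_sub_of_lt_order]
  intro i hi
  rw [order_X_pow]
  have h1 := he i
  have h2 : n + 1 ≤ i := (Finset.mem_Ico.mp hi).1
  exact_mod_cast (by omega : n < e i)

theorem TEq_f (r n N : ℕ) (hr : 0 < r) (h : n < N) : TEq n (f r) (Fp r N) := by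
  intro j hj
  rw [f, qProd, coeff_mk, Fp]
  exact coeff_prod_stable (fun k => r * (k + 1)) (fun k => Nat.le_mul_of_pos_left _ hr)
    j (Nat.lt_succ_self j) (by omega)


def Op (M : ℕ) : PowerSeries ℤ := ∏ k ∈ range M, (1 - (X : PowerSeries ℤ) ^ (2 * k + 1))
def Ot (M : ℕ) : PowerSeries ℤ := ∏ k ∈ range M, (1 + (X : PowerSeries ℤ) ^ (2 * k + 1))
def Pp (M : ℕ) : PowerSeries ℤ := ∏ k ∈ range M, (1 + (X : PowerSeries ℤ) ^ (6 * (k + 1)))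
def D (i : ℕ) : PowerSeries ℤ := if Even i then 1 - X ^ (2 * i) else 1 - X ^ i
def E (i : ℕ) : PowerSeries ℤ := if Even i then 1 + X ^ (3 * i) else 1

theorem not_even_odd (M : ℕ) : ¬ Even (2 * M + 1) := by
  simp [Nat.even_add_one, Nat.even_mul]

theorem even_even (M : ℕ) : Even (2 * M + 1 + 1) := ⟨M + 1, by ring⟩

theorem key1 (M : ℕ) : (∏ k ∈ range (2 * M), D (k + 1)) = Op M * Fp 4 M := by
  induction M with
  | zero => simp [Op, Fp]
  | succ M ih =>
    have h2 : 2 * (M + 1) = 2 * M + 1 + 1 := by ring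
    rw [h2]
    simp only [Op, Fp, D, prod_range_succ, if_neg (not_even_odd M),
      if_pos (even_even M)] at ih ⊢
    rw [ih]
    ring

theorem key2 (M : ℕ) : (∏ k ∈ range (2 * M), E (k + 1)) = Pp M := by
  induction M with
  | zero => simp [Pp]
  | succ M ih =>
    have h2 : 2 * (M + 1) = 2 * M + 1 + 1 := by ring
    rw [h2]
    simp only [Pp, E, prod_range_succ, if_neg (not_even_odd M), if_pos (even_even M)] at ih ⊢
    rw [ih]
    ring

theorem key3 (M : ℕ) : Fp 1 (2 * M) = Op M * Fp 2 M := by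
  induction M with
  | zero => simp [Op, Fp]
  | succ M ih =>
    have h2 : 2 * (M + 1) = 2 * M + 1 + 1 := by ring
    rw [h2]
    simp only [Op, Fp, prod_range_succ] at ih ⊢
    rw [ih]
    ring

theorem key4 (M : ℕ) : Pp M * Fp 6 M = Fp 12 M := by
  induction M with
  | zero => simp [Pp, Fp]
  | succ M ih =>
    simp only [Pp, Fp, prod_range_succ] at ih ⊢
    rw [← ih]
    ring

theorem rescale_Fp1 (N : ℕ) :
    rescale (-1 : ℤ) (Fp 1 N) = ∏ k ∈ range N, (1 - (-(X : PowerSeries ℤ)) ^ (k + 1)) := by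
  rw [Fp, map_prod]
  refine prod_congr rfl fun k _ => ?_
  rw [map_sub, map_one, map_pow, rescale_neg_one_X, one_mul]

theorem key5 (M : ℕ) :
    (∏ k ∈ range (2 * M), (1 - (-(X : PowerSeries ℤ)) ^ (k + 1))) = Ot M * Fp 2 M := by
  induction M with
  | zero => simp [Ot, Fp]
  | succ M ih =>
    have h2 : 2 * (M + 1) = 2 * M + 1 + 1 := by ring
    have o1 : (-(X : PowerSeries ℤ)) ^ (2 * M + 1) = -(X ^ (2 * M + 1)) :=
      Odd.neg_pow ⟨M, by ring⟩ X
    have o2 : (-(X : PowerSeries ℤ)) ^ (2 * M + 1 + 1) = X ^ (2 * M + 1 + 1) :=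
      Even.neg_pow (even_even M) X
    rw [h2]
    simp only [Ot, Fp, prod_range_succ] at ih ⊢
    rw [ih, o1, o2]
    ring

theorem key6a (M : ℕ) :
    Ot M * Op M = ∏ k ∈ range M, (1 - (X : PowerSeries ℤ) ^ (4 * k + 2)) := by
  rw [Ot, Op, ← prod_mul_distrib]
  refine prod_congr rfl fun k _ => ?_
  ring

theorem key6 (M : ℕ) :
    (∏ k ∈ range M, (1 - (X : PowerSeries ℤ) ^ (4 * k + 2))) * Fp 4 M = Fp 2 (2 * M) := by
  induction M with
  | zero => simp [Fp]
  | succ M ih =>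
    have h2 : 2 * (M + 1) = 2 * M + 1 + 1 := by ring
    rw [h2]
    simp only [Fp, prod_range_succ] at ih ⊢
    rw [← ih]
    ring


theorem prod_map_B (N : ℕ) :
    (∏ i ∈ (range N).map ⟨Nat.succ, Nat.succ_injective⟩, B i) = ∏ k ∈ range N, B (k + 1) := by
  rw [Finset.prod_map]; rfl

theorem TEq_mkP (n N : ℕ) (h : n ≤ N) :
    TEq n (PowerSeries.mk fun m => (pend m : ℤ)) (∏ k ∈ range N, B (k + 1)) := by
  intro j hj
  rw [coeff_mk, ← prod_map_B, ← pend_eq j N (by omega)]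

theorem exact1 (M : ℕ) :
    (∏ k ∈ range (2 * M), B (k + 1)) * Fp 1 (2 * M) * Fp 4 M * Fp 6 M = Fp 2 M * Fp 12 M := by
  have hBD : (∏ k ∈ range (2 * M), B (k + 1)) * (∏ k ∈ range (2 * M), D (k + 1))
      = ∏ k ∈ range (2 * M), E (k + 1) := by
    rw [← prod_mul_distrib]
    refine prod_congr rfl fun k _ => ?_
    rw [mul_comm]; exact DB (k + 1) (Nat.succ_pos k)
  have h1 := key1 M
  have h2 := key2 M
  have h4 := key4 M
  rw [key3 M]
  linear_combination (-(Fp 2 M * Fp 6 M * (∏ k ∈ range (2 * M), B (k + 1)))) * h1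
    + (Fp 2 M * Fp 6 M) * hBD + (Fp 2 M * Fp 6 M) * h2 + Fp 2 M * h4

theorem E1 : (PowerSeries.mk fun m => (pend m : ℤ)) * f 1 * f 4 * f 6 = f 2 * f 12 := by
  ext n
  have hA : TEq n ((PowerSeries.mk fun m => (pend m : ℤ)) * f 1 * f 4 * f 6)
      ((∏ k ∈ range (2 * (n+1)), B (k + 1)) * Fp 1 (2 * (n+1)) * Fp 4 (n+1) * Fp 6 (n+1)) :=
    ((((TEq_mkP n (2*(n+1)) (by omega)).mul (TEq_f 1 n (2*(n+1)) one_pos (by omega))).mul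
      (TEq_f 4 n (n+1) (by omega) (by omega))).mul (TEq_f 6 n (n+1) (by omega) (by omega)))
  have hB : TEq n (f 2 * f 12) (Fp 2 (n+1) * Fp 12 (n+1)) :=
    (TEq_f 2 n (n+1) (by omega) (by omega)).mul (TEq_f 12 n (n+1) (by omega) (by omega))
  rw [hA n le_rfl, hB n le_rfl, exact1 (n+1)]

theorem exact2 (M : ℕ) :
    rescale (-1 : ℤ) (Fp 1 (2 * M)) * Fp 1 (2 * M) * Fp 4 M
      = Fp 2 (2 * M) * (Fp 2 M * Fp 2 M) := by
  rw [rescale_Fp1, key5 M, key3 M, ← key6 M, ← key6a M]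
  ring

theorem E2 : rescale (-1 : ℤ) (f 1) * f 1 * f 4 = f 2 * (f 2 * f 2) := by
  ext n
  have hr : TEq n (rescale (-1:ℤ) (f 1)) (rescale (-1:ℤ) (Fp 1 (2*(n+1)))) := by
    intro j hj
    rw [coeff_rescale, coeff_rescale, TEq_f 1 n (2*(n+1)) one_pos (by omega) j hj]
  have hA := (hr.mul (TEq_f 1 n (2*(n+1)) one_pos (by omega))).mul
    (TEq_f 4 n (n+1) (by omega) (by omega))
  have hB := (TEq_f 2 n (2*(n+1)) (by omega) (by omega)).mul
    ((TEq_f 2 n (n+1) (by omega) (by omega)).mul (TEq_f 2 n (n+1) (by omega) (by omega)))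
  rw [hA n le_rfl, hB n le_rfl, exact2 (n+1)]

theorem rescale_Fp_even (r : ℕ) (hr : Even r) (N : ℕ) :
    rescale (-1 : ℤ) (Fp r N) = Fp r N := by
  rw [Fp, map_prod]
  refine prod_congr rfl fun k _ => ?_
  rw [map_sub, map_one, map_pow, rescale_neg_one_X, Even.neg_pow (hr.mul_right (k+1))]

theorem rescale_f_even (r : ℕ) (hr : Even r) (h0 : 0 < r) :
    rescale (-1 : ℤ) (f r) = f r := by
  ext n
  rw [coeff_rescale, TEq_f r n (n+1) h0 (by omega) n le_rfl, ← coeff_rescale,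
    rescale_Fp_even r hr]

theorem coeff_zero_f (r : ℕ) (hr : 0 < r) : coeff (R := ℤ) 0 (f r) = 1 := by
  rw [TEq_f r 0 1 hr one_pos 0 le_rfl]
  simp [Fp, hr.ne']

theorem f_ne_zero (r : ℕ) (hr : 0 < r) : f r ≠ 0 := fun h => by
  have h1 := coeff_zero_f r hr
  rw [h] at h1
  simp at h1

theorem g1_ne_zero : rescale (-1 : ℤ) (f 1) ≠ 0 := fun h => by
  have h1 : coeff (R := ℤ) 0 (rescale (-1 : ℤ) (f 1)) = 1 := by
    rw [coeff_rescale]; simp [coeff_zero_f 1 one_pos]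
  rw [h] at h1
  simp at h1

theorem main :
    (PowerSeries.mk fun n => (-1) ^ n * (pend n : ℤ)) * (f 2) ^ 2 * f 6 = f 1 * f 12 := by
  have h := congrArg (rescale (-1 : ℤ)) E1
  rw [map_mul, map_mul, map_mul, map_mul, rescale_mk, rescale_f_even 4 ⟨2, rfl⟩ (by norm_num),
    rescale_f_even 6 ⟨3, rfl⟩ (by norm_num), rescale_f_even 2 ⟨1, rfl⟩ (by norm_num),
    rescale_f_even 12 ⟨6, rfl⟩ (by norm_num)] at h
  have hE2 := E2
  have hne : rescale (-1 : ℤ) (f 1) * f 4 ≠ 0 := mul_ne_zero g1_ne_zero (f_ne_zero 4 (by norm_num))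
  apply mul_right_cancel₀ hne
  linear_combination (f 2) ^ 2 * h - f 12 * hE2

end PendProof
end

/-- `∑_{n≥0} (-1)ⁿ pend(n) qⁿ = f₁ f₁₂ / (f₂² f₆)` in `ℤ[[q]]`. -/
theorem pend_generating_function_negq :
    (PowerSeries.mk fun n => (-1) ^ n * (pend n : ℤ)) * (f 2) ^ 2 * f 6 = f 1 * f 12 := by
  exact PendProof.main
end

section
/- In the ring of formal power series ℤ[[q]], ( ∑_{n≥0} (−1)^n pond(n) q^n ) · f₂² · f₆ = f₃ · f₄; equivalently, ∑_{n≥0} (−1)^n pond(n) q^n = (f₃ f₄)/(f₂² f₆). -/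
open PowerSeries Finset
open Finset.HasAntidiagonal
open scoped Classical

noncomputable section

namespace PondAux

abbrev R : Type := PowerSeries ℤ

def indicatorSeries (α : Type*) [Semiring α] (s : Set ℕ) : PowerSeries α :=
  PowerSeries.mk fun n => if n ∈ s then 1 else 0

theorem coeff_indicator {α : Type*} (s : Set ℕ) [Semiring α] (n : ℕ) :
    coeff (R := α) n (indicatorSeries _ s) = if n ∈ s then 1 else 0 :=
  coeff_mk _ _

def cset (i : ℕ) : Set ℕ := {m | Odd i → m ≠ 1}

def Cs (i : ℕ) : R := indicatorSeries ℤ ((· * i) '' cset i)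

theorem mem_image_cset {i j : ℕ} : j ∈ (· * i) '' cset i ↔ ∃ m, (Odd i → m ≠ 1) ∧ m * i = j := by
  simp [cset, Set.mem_image]

theorem Cs_sub_one_dvd {i : ℕ} (hi : 0 < i) : (X : R) ^ i ∣ Cs i - 1 := by
  rw [PowerSeries.X_pow_dvd_iff]
  intro j hj
  rw [map_sub, Cs, coeff_indicator, PowerSeries.coeff_one]
  rcases Nat.eq_zero_or_pos j with rfl | hj0
  · rw [if_pos, if_pos rfl]
    · ring
    · exact mem_image_cset.2 ⟨0, fun _ => by omega, by ring⟩
  · rw [if_neg, if_neg (by omega)]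
    · ring
    · intro h
      obtain ⟨m, _, hm⟩ := mem_image_cset.1 h
      rcases Nat.eq_zero_or_pos m with rfl | hm0 <;> nlinarith

theorem Cs_even_mul {i : ℕ} (hi : 0 < i) (he : ¬ Odd i) : Cs i * (1 - (X : R) ^ i) = 1 := by
  ext d
  rw [mul_sub, mul_one, map_sub, PowerSeries.coeff_mul_X_pow', Cs]
  have hmem : ∀ j : ℕ, (j ∈ (· * i) '' cset i) ↔ i ∣ j := by
    intro j
    rw [mem_image_cset]
    constructor
    · rintro ⟨m, _, rfl⟩; exact ⟨m, mul_comm m i⟩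
    · rintro ⟨m, rfl⟩; exact ⟨m, fun h => absurd h he, mul_comm m i⟩
  simp only [coeff_indicator, hmem, PowerSeries.coeff_one]
  split_ifs with h1 h2 h3 h4 h5 h6 h7 h8 h9 h10 h11 h12 h13 h14 <;>
    first
      | omega
      | (exact absurd (Nat.dvd_sub ‹i ∣ d› dvd_rfl) ‹¬ i ∣ d - i›)
      | (exact absurd (Nat.le_of_dvd (by omega) ‹i ∣ d›) ‹¬ i ≤ d›)
      | (exfalso; apply ‹¬ i ∣ d›
         have := Nat.dvd_add ‹i ∣ d - i› (dvd_refl i)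
         rwa [Nat.sub_add_cancel ‹i ≤ d›] at this)
      | (exfalso; apply ‹¬ i ∣ d›; rw [‹d = 0›]; exact dvd_zero i)

theorem Cs_odd_mul {i : ℕ} (ho : Odd i) : Cs i * (1 - (X : R) ^ (2 * i)) = 1 + X ^ (3 * i) := by
  have hi : 0 < i := ho.pos
  ext d
  rw [mul_sub, mul_one, map_sub, map_add, PowerSeries.coeff_mul_X_pow', Cs,
    PowerSeries.coeff_one, PowerSeries.coeff_X_pow]
  have hmem : ∀ j : ℕ, (j ∈ (· * i) '' cset i) ↔ i ∣ j ∧ j ≠ i := by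
    intro j
    rw [mem_image_cset]
    constructor
    · rintro ⟨m, hm, rfl⟩
      refine ⟨⟨m, mul_comm m i⟩, fun hji => hm ho ?_⟩
      exact Nat.eq_of_mul_eq_mul_right hi (by rw [one_mul]; exact hji)
    · rintro ⟨⟨m, rfl⟩, hne⟩
      exact ⟨m, fun _ hm1 => hne (by rw [hm1, mul_one]), mul_comm m i⟩
  simp only [coeff_indicator, hmem]
  by_cases hdvd : i ∣ d
  · obtain ⟨m, rfl⟩ := hdvd
    have hA : (i ∣ i * m ∧ i * m ≠ i) ↔ m ≠ 1 := by
      constructor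
      · rintro ⟨-, h⟩ rfl; exact h (mul_one i)
      · intro h
        exact ⟨⟨m, rfl⟩, fun he => h (Nat.eq_of_mul_eq_mul_left hi (by rw [mul_one]; exact he))⟩
    have hB : 2 * i ≤ i * m ↔ 2 ≤ m := by
      constructor
      · intro h
        by_contra hc
        push_neg at hc
        have h2 : i * m ≤ i * 1 := Nat.mul_le_mul_left i (by omega)
        nlinarith
      · intro h; calc 2 * i = i * 2 := by ring
                   _ ≤ i * m := Nat.mul_le_mul_left i h
    have hsub : i * m - 2 * i = i * (m - 2) := by rw [Nat.mul_sub]; ring_nf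
    have hC : (i ∣ i * (m - 2) ∧ i * (m - 2) ≠ i) ↔ m - 2 ≠ 1 := by
      constructor
      · rintro ⟨-, h⟩ he; exact h (by rw [he, mul_one])
      · intro h
        exact ⟨⟨m - 2, rfl⟩, fun he => h (Nat.eq_of_mul_eq_mul_left hi (by rw [mul_one]; exact he))⟩
    have hD : i * m = 0 ↔ m = 0 := by
      rw [Nat.mul_eq_zero]; omega
    have hE : i * m = 3 * i ↔ m = 3 := by
      rw [mul_comm 3 i]
      exact ⟨fun h => Nat.eq_of_mul_eq_mul_left hi h, fun h => by rw [h]⟩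
    rw [hsub]
    simp only [hA, hB, hC, hD, hE]
    split_ifs <;> omega
  · have k1 : ¬ (i ∣ d ∧ d ≠ i) := fun h => hdvd h.1
    have k2 : ¬ (d = 0) := by rintro rfl; exact hdvd (dvd_zero i)
    have k3 : ¬ (d = 3 * i) := by rintro rfl; exact hdvd ⟨3, by ring⟩
    by_cases h1 : 2 * i ≤ d
    · have k4 : ¬ (i ∣ d - 2 * i ∧ d - 2 * i ≠ i) := by
        rintro ⟨h2, -⟩
        apply hdvd
        have := Nat.dvd_add h2 (⟨2, by ring⟩ : i ∣ 2 * i)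
        rwa [Nat.sub_add_cancel h1] at this
      rw [if_neg k1, if_pos h1, if_neg k4, if_neg k2, if_neg k3]; ring
    · rw [if_neg k1, if_neg h1, if_neg k2, if_neg k3]; ring

def ME (n : ℕ) (a b : R) : Prop := (X : R) ^ n ∣ a - b

theorem ME_iff {n : ℕ} {a b : R} : ME n a b ↔ ∀ i < n, coeff (R := ℤ) i a = coeff (R := ℤ) i b := by
  unfold ME
  rw [PowerSeries.X_pow_dvd_iff]
  simp [sub_eq_zero]

theorem ME.refl (n : ℕ) (a : R) : ME n a a := by simp [ME]

theorem ME.symm {n : ℕ} {a b : R} (h : ME n a b) : ME n b a := by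
  unfold ME at h ⊢
  rw [← neg_sub a b]
  exact dvd_neg.mpr h

theorem ME.trans {n : ℕ} {a b c : R} (h : ME n a b) (h' : ME n b c) : ME n a c := by
  have := dvd_add h h'
  simpa [ME] using this

theorem ME.mul {n : ℕ} {a b c d : R} (h : ME n a b) (h' : ME n c d) : ME n (a * c) (b * d) := by
  have : a * c - b * d = a * (c - d) + (a - b) * d := by ring
  unfold ME
  rw [this]
  exact dvd_add (Dvd.dvd.mul_left h' a) (Dvd.dvd.mul_right h d)

theorem ME.coeff {n : ℕ} {a b : R} (h : ME n a b) {i : ℕ} (hi : i < n) :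
    coeff (R := ℤ) i a = coeff (R := ℤ) i b := ME_iff.1 h i hi

theorem ME_ext {a b : R} (h : ∀ n, ME n a b) : a = b := by
  ext i
  exact (h (i + 1)).coeff (Nat.lt_succ_self i)

theorem prod_ME {n : ℕ} {s : Finset ℕ} {g h : ℕ → R}
    (H : ∀ k ∈ s, ME n (g k) (h k)) : ME n (∏ k ∈ s, g k) (∏ k ∈ s, h k) := by
  classical
  induction s using Finset.induction with
  | empty => simpa using ME.refl n 1
  | insert _ _ hx ih =>
    rw [Finset.prod_insert hx, Finset.prod_insert hx]
    exact (H _ (mem_insert_self _ _)).mul (ih fun k hk => H k (mem_insert_of_mem hk))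

theorem prod_tail_ME {g : ℕ → R} {n m N : ℕ} (hm : m ≤ N)
    (hg : ∀ k, m ≤ k → (X : R) ^ n ∣ g k - 1) :
    ME n (∏ k ∈ range N, g k) (∏ k ∈ range m, g k) := by
  obtain ⟨t, rfl⟩ : ∃ t, N = m + t := ⟨N - m, by omega⟩
  rw [Finset.prod_range_add]
  have h1 : ME n (∏ x ∈ range t, g (m + x)) 1 := by
    have := prod_ME (n := n) (s := range t) (g := fun x => g (m + x)) (h := fun _ => 1)
      (fun k _ => hg (m + k) (by omega))
    simpa using this
  simpa using (ME.refl n (∏ k ∈ range m, g k)).mul h1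

theorem qProd_ME {g : ℕ → R} (hg : ∀ k, (X : R) ^ (k + 1) ∣ g k - 1) {n N : ℕ} (hN : n ≤ N) :
    ME n (qProd g) (∏ k ∈ range N, g k) := by
  rw [ME_iff]
  intro i hi
  have h1 : coeff (R := ℤ) i (qProd g) = coeff (R := ℤ) i (∏ k ∈ range (i + 1), g k) := coeff_mk _ _
  rw [h1]
  have h2 : ME (i + 1) (∏ k ∈ range N, g k) (∏ k ∈ range (i + 1), g k) :=
    prod_tail_ME (by omega) fun k hk =>
      dvd_trans (pow_dvd_pow _ (by omega)) (hg k)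
  exact (h2.coeff (Nat.lt_succ_self i)).symm

theorem f_ME {r : ℕ} (hr : 0 < r) {n N : ℕ} (hN : n ≤ N) :
    ME n (f r) (∏ k ∈ range N, (1 - (X : R) ^ (r * (k + 1)))) := by
  apply qProd_ME (fun k => ?_) hN
  have : (1 : R) - X ^ (r * (k + 1)) - 1 = -(X ^ (r * (k + 1))) := by ring
  rw [this, dvd_neg]
  exact pow_dvd_pow _ (by nlinarith)

-- The main workhorse of the partition theorem proof.
theorem partialGF_prop (α : Type*) [CommSemiring α] (n : ℕ) (s : Finset ℕ) (hs : ∀ i ∈ s, 0 < i)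
    (c : ℕ → Set ℕ) (hc : ∀ i, i ∉ s → 0 ∈ c i) :
    #{p : n.Partition | (∀ j, p.parts.count j ∈ c j) ∧ ∀ j ∈ p.parts, j ∈ s} =
      coeff (R := α) n (∏ i ∈ s, indicatorSeries α ((· * i) '' c i)) := by
  simp_rw [coeff_prod, coeff_indicator, prod_boole, sum_boole]
  apply congr_arg
  simp only [mem_univ, forall_true_left, not_and, not_forall, exists_prop,
    Set.mem_image, not_exists]
  set φ : (a : Nat.Partition n) →
    a ∈ filter (fun p ↦ (∀ (j : ℕ), Multiset.count j p.parts ∈ c j) ∧ ∀ j ∈ p.parts, j ∈ s) univ →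
    ℕ →₀ ℕ := fun p _ => {
      toFun := fun i => Multiset.count i p.parts • i
      support := Finset.filter (fun i => i ≠ 0) p.parts.toFinset
      mem_support_toFun := fun a => by
        simp only [smul_eq_mul, ne_eq, mul_eq_zero, Multiset.count_eq_zero]
        rw [not_or, not_not]
        simp only [Multiset.mem_toFinset, not_not, mem_filter] }
  refine Finset.card_bij φ ?_ ?_ ?_
  · intro a ha
    simp only [φ, not_forall, not_exists, not_and, exists_prop, mem_filter]
    rw [mem_finsuppAntidiag]
    dsimp only [ne_eq, smul_eq_mul, id_eq, eq_mpr_eq_cast, le_eq_subset, Finsupp.coe_mk]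
    simp only [mem_univ, forall_true_left, not_and, not_forall, exists_prop,
      mem_filter, true_and] at ha
    refine ⟨⟨?_, fun i ↦ ?_⟩, fun i _ ↦ ⟨a.parts.count i, ha.1 i, rfl⟩⟩
    · conv_rhs => simp [← a.parts_sum]
      rw [sum_multiset_count_of_subset _ s]
      · simp only [smul_eq_mul]
      · intro i
        simp only [Multiset.mem_toFinset, not_not, mem_filter]
        apply ha.2
    · simp only [ne_eq, Multiset.mem_toFinset, not_not, mem_filter, and_imp]
      exact fun hi _ ↦ ha.2 i hi
  · intro p₁ hp₁ p₂ hp₂ h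
    apply Nat.Partition.ext
    simp only [true_and, mem_univ, mem_filter] at hp₁ hp₂
    ext i
    simp only [φ, ne_eq, Multiset.mem_toFinset, not_not, smul_eq_mul, Finsupp.mk.injEq] at h
    by_cases hi : i = 0
    · rw [hi]
      rw [Multiset.count_eq_zero_of_notMem]
      · rw [Multiset.count_eq_zero_of_notMem]
        intro a; exact Nat.lt_irrefl 0 (hs 0 (hp₂.2 0 a))
      intro a; exact Nat.lt_irrefl 0 (hs 0 (hp₁.2 0 a))
    · rw [← mul_left_inj' hi]
      rw [funext_iff] at h
      exact h.2 i
  · simp only [φ, mem_filter, mem_finsuppAntidiag, mem_univ, exists_prop, true_and, and_assoc]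
    rintro f ⟨hf, hf₃, hf₄⟩
    have hf' : f ∈ finsuppAntidiag s n := mem_finsuppAntidiag.mpr ⟨hf, hf₃⟩
    simp only [mem_finsuppAntidiag] at hf'
    refine ⟨⟨∑ i ∈ s, Multiset.replicate (f i / i) i, ?_, ?_⟩, ?_, ?_, ?_⟩
    · intro i hi
      simp only [exists_prop, Multiset.mem_sum, mem_map, Function.Embedding.coeFn_mk] at hi
      rcases hi with ⟨t, ht, z⟩
      apply hs
      rwa [Multiset.eq_of_mem_replicate z]
    · simp_rw [Multiset.sum_sum, Multiset.sum_replicate, Nat.nsmul_eq_mul]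
      rw [← hf'.1]
      refine sum_congr rfl fun i hi => Nat.div_mul_cancel ?_
      rcases hf₄ i hi with ⟨w, _, hw₂⟩
      rw [← hw₂]
      exact dvd_mul_left _ _
    · intro i
      simp_rw [Multiset.count_sum', Multiset.count_replicate, sum_ite_eq']
      split_ifs with h
      · rcases hf₄ i h with ⟨w, hw₁, hw₂⟩
        rwa [← hw₂, Nat.mul_div_cancel _ (hs i h)]
      · exact hc _ h
    · intro i hi
      rw [Multiset.mem_sum] at hi
      rcases hi with ⟨j, hj₁, hj₂⟩
      rwa [Multiset.eq_of_mem_replicate hj₂]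
    · ext i
      simp_rw [Multiset.count_sum', Multiset.count_replicate, sum_ite_eq']
      simp only [ne_eq, Multiset.mem_toFinset, not_not, smul_eq_mul, ite_mul,
        zero_mul, Finsupp.coe_mk]
      split_ifs with h
      · apply Nat.div_mul_cancel
        rcases hf₄ i h with ⟨w, _, hw₂⟩
        apply Dvd.intro_left _ hw₂
      · apply symm
        rw [← Finsupp.notMem_support_iff]
        exact notMem_mono hf'.2 h


theorem prod_range_two_mul (h : ℕ → R) (M : ℕ) :
    ∏ k ∈ range (2 * M), h k = ∏ j ∈ range M, (h (2 * j) * h (2 * j + 1)) := by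
  induction M with
  | zero => simp
  | succ M ih =>
    have h2 : 2 * (M + 1) = 2 * M + 1 + 1 := by ring
    rw [h2, Finset.prod_range_succ, Finset.prod_range_succ, ih, Finset.prod_range_succ]
    ring

/-- interleaving odd and even multiples -/
theorem interleave (e M : ℕ) :
    (∏ j ∈ range M, (1 - (X : R) ^ (e * (2 * j + 1)))) *
      ∏ k ∈ range M, (1 - (X : R) ^ (2 * e * (k + 1))) =
    ∏ k ∈ range (2 * M), (1 - (X : R) ^ (e * (k + 1))) := by
  rw [prod_range_two_mul, ← Finset.prod_mul_distrib]
  refine Finset.prod_congr rfl fun j _ => ?_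
  have h1 : e * (2 * j + 1) = e * (2 * j + 1) := rfl
  have h2 : 2 * e * (j + 1) = e * (2 * j + 1 + 1) := by ring
  rw [h2]

theorem rescale_neg_one_X_pow (m : ℕ) :
    rescale (-1 : ℤ) ((X : R) ^ m) = (-1 : R) ^ m * X ^ m := by
  have hC : (C (-1 : ℤ) : R) = (-1 : R) := by simp
  rw [map_pow, rescale_X, hC, mul_pow]

theorem ME.rescale_neg_one {n : ℕ} {a b : R} (h : (X : R) ^ n ∣ a - b) :
    (X : R) ^ n ∣ rescale (-1 : ℤ) a - rescale (-1 : ℤ) b := by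
  obtain ⟨c, hc⟩ := h
  refine ⟨(-1 : R) ^ n * rescale (-1 : ℤ) c, ?_⟩
  rw [← map_sub, hc, map_mul, rescale_neg_one_X_pow]
  ring

theorem pond_eq (n : ℕ) :
    (pond n : ℤ) = coeff (R := ℤ) n (∏ k ∈ range n, Cs (k + 1)) := by
  have h := partialGF_prop ℤ n ((range n).map ⟨Nat.succ, Nat.succ_injective⟩)
      (by intro i hi; simp only [Finset.mem_map, Finset.mem_range] at hi
          obtain ⟨a, -, rfl⟩ := hi; exact Nat.succ_pos a)
      cset (fun i _ => fun _ => one_ne_zero.symm ∘ fun h => h)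
  rw [Finset.prod_map] at h
  have hs : ∀ j : ℕ, (j ∈ (range n).map ⟨Nat.succ, Nat.succ_injective⟩) ↔ (1 ≤ j ∧ j ≤ n) := by
    intro j
    simp only [Finset.mem_map, Finset.mem_range, Function.Embedding.coeFn_mk]
    constructor
    · rintro ⟨a, ha, rfl⟩; omega
    · rintro ⟨h1, h2⟩; exact ⟨j - 1, by omega, by omega⟩
  have hcard : pond n =
      #{p : n.Partition | (∀ j, p.parts.count j ∈ cset j) ∧
        ∀ j ∈ p.parts, j ∈ (range n).map ⟨Nat.succ, Nat.succ_injective⟩} := by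
    rw [pond, Nat.card_eq_fintype_card, Fintype.card_subtype]
    refine congrArg Finset.card ?_
    apply Finset.filter_congr
    intro p _
    constructor
    · intro hp
      constructor
      · intro j ho
        by_cases hj : j ∈ p.parts
        · have := hp j hj ho; omega
        · have : p.parts.count j = 0 := Multiset.count_eq_zero.mpr hj
          omega
      · intro j hj
        rw [hs]
        refine ⟨p.parts_pos hj, ?_⟩
        have h1 : j ≤ p.parts.sum :=
          Multiset.single_le_sum (fun x _ => Nat.zero_le x) j hj
        rwa [p.parts_sum] at h1
    · rintro ⟨h1, -⟩ k hk ho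
      have h2 : p.parts.count k ≠ 1 := h1 k ho
      have h3 : 0 < p.parts.count k := Multiset.count_pos.mpr hk
      omega
  rw [hcard]
  exact_mod_cast h

def Pse : R := PowerSeries.mk fun n => (pond n : ℤ)

theorem P_ME {n m : ℕ} (h : n ≤ m) : ME n Pse (∏ k ∈ range m, Cs (k + 1)) := by
  rw [ME_iff]
  intro i hi
  rw [Pse, coeff_mk, pond_eq]
  have h2 : ME (i + 1) (∏ k ∈ range m, Cs (k + 1)) (∏ k ∈ range i, Cs (k + 1)) :=
    prod_tail_ME (by omega)
      (fun k hk => dvd_trans (pow_dvd_pow _ (by omega)) (Cs_sub_one_dvd k.succ_pos))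
  exact (h2.coeff (Nat.lt_succ_self i)).symm

theorem coeff_odd_prod_even {s : Finset ℕ} {g : ℕ → R}
    (hg : ∀ k ∈ s, ∀ j, ¬ (2 ∣ j) → coeff (R := ℤ) j (g k) = 0) :
    ∀ j, ¬ (2 ∣ j) → coeff (R := ℤ) j (∏ k ∈ s, g k) = 0 := by
  classical
  induction s using Finset.induction with
  | empty =>
    intro j hj
    rw [Finset.prod_empty, coeff_one, if_neg (by omega)]
  | insert _ _ hx ih =>
    intro j hj
    rw [Finset.prod_insert hx, coeff_mul]
    apply Finset.sum_eq_zero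
    rintro ⟨p, q⟩ hpq
    rw [Finset.HasAntidiagonal.mem_antidiagonal] at hpq
    rcases (by omega : ¬ (2 ∣ p) ∨ ¬ (2 ∣ q)) with h | h
    · rw [hg _ (mem_insert_self _ _) p h, zero_mul]
    · rw [ih (fun k hk => hg k (mem_insert_of_mem hk)) q h, mul_zero]

theorem rescale_neg_one_f {r : ℕ} (hr : 0 < r) (h2 : 2 ∣ r) :
    rescale (-1 : ℤ) (f r) = f r := by
  ext j
  rw [coeff_rescale]
  by_cases hj : 2 ∣ j
  · obtain ⟨t, rfl⟩ := hj
    rw [pow_mul]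
    norm_num
  · have h0 : coeff (R := ℤ) j (f r) = 0 := by
      have hme := (f_ME hr (le_refl (j + 1))).coeff (Nat.lt_succ_self j)
      rw [hme]
      refine coeff_odd_prod_even (fun k _ j' hj' => ?_) j hj
      rw [map_sub, coeff_one, PowerSeries.coeff_X_pow, if_neg (by omega), if_neg, sub_zero]
      rintro rfl
      exact hj' (Dvd.dvd.mul_right h2 _)
    rw [h0, mul_zero]

theorem f_ne_zero {r : ℕ} (hr : 0 < r) : f r ≠ 0 := by
  intro h
  have h1 : coeff (R := ℤ) 0 (f r) = 1 := by
    have hme := (f_ME hr (le_refl 1)).coeff (by norm_num : (0 : ℕ) < 1)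
    rw [hme, Finset.prod_range_one, map_sub, coeff_one, PowerSeries.coeff_X_pow,
      if_pos rfl, if_neg (by simp; omega)]
    norm_num
  rw [h] at h1
  simp at h1

theorem neg_one_pow_odd (j : ℕ) : ((-1 : R)) ^ (2 * j + 1) = -1 := by
  rw [pow_succ, pow_mul]
  norm_num

theorem neg_one_pow_even (j : ℕ) : ((-1 : R)) ^ (2 * j + 2) = 1 := by
  rw [show 2 * j + 2 = 2 * (j + 1) by ring, pow_mul]
  norm_num

/-- interleaving odd and even multiples of 6 -/
theorem interleave6 (M : ℕ) :
    (∏ j ∈ range M, (1 - (X : R) ^ (6 * (2 * j + 1)))) *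
      ∏ k ∈ range M, (1 - (X : R) ^ (12 * (k + 1))) =
    ∏ k ∈ range (2 * M), (1 - (X : R) ^ (6 * (k + 1))) := by
  rw [prod_range_two_mul, ← Finset.prod_mul_distrib]
  refine Finset.prod_congr rfl fun j _ => ?_
  have h2 : 12 * (j + 1) = 6 * (2 * j + 1 + 1) := by ring
  rw [h2]

theorem identity_II :
    rescale (-1 : ℤ) (f 3) * (f 3 * f 12) = f 6 * f 6 * f 6 := by
  apply ME_ext
  intro n
  have h3 : ME n (f 3) (∏ k ∈ range (2 * n), (1 - (X : R) ^ (3 * (k + 1)))) :=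
    f_ME (by norm_num) (by omega)
  have hg3 : ME n (rescale (-1 : ℤ) (f 3))
      (∏ k ∈ range (2 * n), (1 - (-1 : R) ^ (k + 1) * X ^ (3 * (k + 1)))) := by
    have h := ME.rescale_neg_one h3
    have heq : rescale (-1 : ℤ) (∏ k ∈ range (2 * n), (1 - (X : R) ^ (3 * (k + 1)))) =
        ∏ k ∈ range (2 * n), (1 - (-1 : R) ^ (k + 1) * X ^ (3 * (k + 1))) := by
      rw [map_prod]
      refine Finset.prod_congr rfl fun k _ => ?_
      rw [map_sub, map_one, rescale_neg_one_X_pow]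
      have hsq : ((-1 : R) ^ (k + 1)) ^ 2 = 1 := by
        rw [← pow_mul, mul_comm (k + 1) 2, pow_mul]
        norm_num
      have hexp : (-1 : R) ^ (3 * (k + 1)) = (-1 : R) ^ (k + 1) := by
        rw [show 3 * (k + 1) = (k + 1) * 2 + (k + 1) by ring, pow_add, pow_mul, ← pow_mul,
          mul_comm (k + 1) 2, pow_mul]
        norm_num
      rw [hexp]
    rw [heq] at h
    exact h
  have h12 : ME n (f 12) (∏ k ∈ range n, (1 - (X : R) ^ (12 * (k + 1)))) :=
    f_ME (by norm_num) (le_refl n)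
  have h6a : ME n (f 6) (∏ k ∈ range n, (1 - (X : R) ^ (6 * (k + 1)))) :=
    f_ME (by norm_num) (le_refl n)
  have h6b : ME n (f 6) (∏ k ∈ range (2 * n), (1 - (X : R) ^ (6 * (k + 1)))) :=
    f_ME (by norm_num) (by omega)
  refine ((hg3.mul (h3.mul h12)).trans ?_).trans ((h6a.mul h6a |>.mul h6b).symm)
  -- now a finite identity
  set M := n
  have hkey : (∏ k ∈ range (2 * M), (1 - (-1 : R) ^ (k + 1) * X ^ (3 * (k + 1)))) *
      (∏ k ∈ range (2 * M), (1 - (X : R) ^ (3 * (k + 1)))) =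
      (∏ j ∈ range M, (1 - (X : R) ^ (6 * (2 * j + 1)))) *
        ((∏ j ∈ range M, (1 - (X : R) ^ (6 * (j + 1)))) *
          ∏ j ∈ range M, (1 - (X : R) ^ (6 * (j + 1)))) := by
    rw [← Finset.prod_mul_distrib, prod_range_two_mul, ← Finset.prod_mul_distrib,
      ← Finset.prod_mul_distrib]
    refine Finset.prod_congr rfl fun j _ => ?_
    rw [neg_one_pow_odd j, show 2 * j + 1 + 1 = 2 * j + 2 by ring, neg_one_pow_even j]
    have ha : (X : R) ^ (6 * (2 * j + 1)) = ((X : R) ^ (3 * (2 * j + 1))) ^ 2 := by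
      rw [← pow_mul]; first | (congr 1 <;> ring) | (congr 1)
    have hb : (X : R) ^ (3 * (2 * j + 2)) = (X : R) ^ (6 * (j + 1)) := by
      first | (congr 1 <;> ring) | (congr 1)
    rw [ha, hb]
    ring
  have hint := interleave6 M
  set T := ∏ k ∈ range (2 * M), (1 - (-1 : R) ^ (k + 1) * X ^ (3 * (k + 1)))
  set U := ∏ k ∈ range (2 * M), (1 - (X : R) ^ (3 * (k + 1)))
  set V := ∏ k ∈ range M, (1 - (X : R) ^ (12 * (k + 1)))
  set B := ∏ j ∈ range M, (1 - (X : R) ^ (6 * (j + 1)))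
  set B2 := ∏ k ∈ range (2 * M), (1 - (X : R) ^ (6 * (k + 1)))
  set Podd := ∏ j ∈ range M, (1 - (X : R) ^ (6 * (2 * j + 1)))
  have hfin : T * (U * V) = B * B * B2 := by
    linear_combination V * hkey + (B * B) * hint
  rw [hfin]
  exact ME.refl _ _

theorem identity_I :
    Pse * f 2 * f 2 * f 3 * f 6 * f 12 = f 4 * (f 6 * f 6 * f 6) := by
  apply ME_ext
  intro n
  have hP : ME n Pse (∏ k ∈ range (2 * n), Cs (k + 1)) := P_ME (by omega)
  have h2a : ME n (f 2) (∏ k ∈ range n, (1 - (X : R) ^ (2 * (k + 1)))) :=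
    f_ME (by norm_num) (le_refl n)
  have h2b : ME n (f 2) (∏ k ∈ range (2 * n), (1 - (X : R) ^ (2 * (k + 1)))) :=
    f_ME (by norm_num) (by omega)
  have h3 : ME n (f 3) (∏ k ∈ range (2 * n), (1 - (X : R) ^ (3 * (k + 1)))) :=
    f_ME (by norm_num) (by omega)
  have h4 : ME n (f 4) (∏ k ∈ range n, (1 - (X : R) ^ (4 * (k + 1)))) :=
    f_ME (by norm_num) (le_refl n)
  have h12 : ME n (f 12) (∏ k ∈ range n, (1 - (X : R) ^ (12 * (k + 1)))) :=
    f_ME (by norm_num) (le_refl n)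
  have h6a : ME n (f 6) (∏ k ∈ range n, (1 - (X : R) ^ (6 * (k + 1)))) :=
    f_ME (by norm_num) (le_refl n)
  have h6b : ME n (f 6) (∏ k ∈ range (2 * n), (1 - (X : R) ^ (6 * (k + 1)))) :=
    f_ME (by norm_num) (by omega)
  refine ((((((hP.mul h2a).mul h2b).mul h3).mul h6a).mul h12).trans ?_).trans
    ((h4.mul ((h6a.mul h6a).mul h6b)).symm)
  set M := n
  -- finite identity
  set P1 := ∏ k ∈ range (2 * M), Cs (k + 1) with hP1
  set D1 := ∏ k ∈ range M, (1 - (X : R) ^ (2 * (k + 1))) with hD1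
  set D2 := ∏ k ∈ range (2 * M), (1 - (X : R) ^ (2 * (k + 1))) with hD2
  set U := ∏ k ∈ range (2 * M), (1 - (X : R) ^ (3 * (k + 1))) with hU
  set E := ∏ k ∈ range M, (1 - (X : R) ^ (4 * (k + 1))) with hE
  set V := ∏ k ∈ range M, (1 - (X : R) ^ (12 * (k + 1))) with hV
  set B := ∏ j ∈ range M, (1 - (X : R) ^ (6 * (j + 1))) with hB
  set B2 := ∏ k ∈ range (2 * M), (1 - (X : R) ^ (6 * (k + 1))) with hB2
  set Pplus := ∏ j ∈ range M, (1 + (X : R) ^ (3 * (2 * j + 1))) with hPplus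
  set Podd := ∏ j ∈ range M, (1 - (X : R) ^ (6 * (2 * j + 1))) with hPodd
  set Ceven := ∏ j ∈ range M, Cs (2 * j + 2) with hCeven
  have c1 : P1 * D2 = Pplus * Ceven * E := by
    rw [hP1, hD2, ← Finset.prod_mul_distrib, prod_range_two_mul, hPplus, hCeven, hE,
      ← Finset.prod_mul_distrib, ← Finset.prod_mul_distrib]
    refine Finset.prod_congr rfl fun j _ => ?_
    have hodd : Cs (2 * j + 1) * (1 - (X : R) ^ (2 * (2 * j + 1))) =
        1 + (X : R) ^ (3 * (2 * j + 1)) := Cs_odd_mul ⟨j, by omega⟩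
    have he : (1 : R) - (X : R) ^ (2 * (2 * j + 1 + 1)) = 1 - (X : R) ^ (4 * (j + 1)) := by
      first | (congr 1 <;> ring) | (congr 1)
    calc Cs (2 * j + 1) * (1 - (X : R) ^ (2 * (2 * j + 1))) *
          (Cs (2 * j + 1 + 1) * (1 - (X : R) ^ (2 * (2 * j + 1 + 1))))
        = (Cs (2 * j + 1) * (1 - (X : R) ^ (2 * (2 * j + 1)))) * Cs (2 * j + 2) *
          (1 - (X : R) ^ (2 * (2 * j + 1 + 1))) := by ring_nf
      _ = (1 + (X : R) ^ (3 * (2 * j + 1))) * Cs (2 * j + 2) * (1 - (X : R) ^ (4 * (j + 1))) := by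
          rw [hodd, he]
  have c2 : Ceven * D1 = 1 := by
    rw [hCeven, hD1, ← Finset.prod_mul_distrib]
    apply Finset.prod_eq_one
    intro j _
    have he : (1 : R) - (X : R) ^ (2 * (j + 1)) = 1 - (X : R) ^ (2 * j + 2) := by
      first | (congr 1 <;> ring) | (congr 1)
    rw [he]
    exact Cs_even_mul (by omega) (by rw [Nat.odd_iff]; omega)
  have c3 : Pplus * U = Podd * B := by
    rw [hPplus, hU, hPodd, hB, prod_range_two_mul, ← Finset.prod_mul_distrib,
      ← Finset.prod_mul_distrib]
    refine Finset.prod_congr rfl fun j _ => ?_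
    have ha : (X : R) ^ (6 * (2 * j + 1)) = ((X : R) ^ (3 * (2 * j + 1))) ^ 2 := by
      rw [← pow_mul]; first | (congr 1 <;> ring) | (congr 1)
    have hb : (X : R) ^ (3 * (2 * j + 1 + 1)) = (X : R) ^ (6 * (j + 1)) := by
      first | (congr 1 <;> ring) | (congr 1)
    rw [hb, ha]
    ring
  have c4 : Podd * V = B2 := interleave6 M
  have hfin : P1 * D1 * D2 * U * B * V = E * (B * B * B2) := by
    linear_combination (D1 * U * B * V) * c1 + (Ceven * D1 * E * B * V) * c3 +
      (E * Podd * B * B * V) * c2 + (E * B * B) * c4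
  rw [hfin]
  exact ME.refl _ _

theorem pond_generating_function_negq' :
    (PowerSeries.mk fun n => (-1) ^ n * (pond n : ℤ)) * (f 2) ^ 2 * f 6 = f 3 * f 4 := by
  have hI := identity_I
  have hII := identity_II
  have hne : f 3 * f 12 ≠ 0 :=
    mul_ne_zero (f_ne_zero (by norm_num)) (f_ne_zero (by norm_num))
  have key : Pse * f 2 * f 2 * f 6 = rescale (-1 : ℤ) (f 3) * f 4 := by
    apply mul_right_cancel₀ hne
    linear_combination hI - f 4 * hII
  have happ := congrArg (rescale (-1 : ℤ)) key
  rw [map_mul, map_mul, map_mul, map_mul] at happ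
  have hP : rescale (-1 : ℤ) Pse = PowerSeries.mk fun n => (-1) ^ n * (pond n : ℤ) := by
    ext n
    simp [Pse, coeff_rescale]
  have hres : rescale (-1 : ℤ) (rescale (-1 : ℤ) (f 3)) = f 3 := by
    rw [rescale_rescale]
    norm_num [rescale_one]
  rw [hP, hres, rescale_neg_one_f (by norm_num) (by norm_num),
    rescale_neg_one_f (by norm_num) (by norm_num),
    rescale_neg_one_f (by norm_num) (by norm_num)] at happ
  calc (PowerSeries.mk fun n => (-1) ^ n * (pond n : ℤ)) * (f 2) ^ 2 * f 6
      = (PowerSeries.mk fun n => (-1) ^ n * (pond n : ℤ)) * f 2 * f 2 * f 6 := by ring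
    _ = f 3 * f 4 := happ

end PondAux

end

/-- `∑_{n≥0} (-1)ⁿ pond(n) qⁿ = f₃ f₄ / (f₂² f₆)` in `ℤ[[q]]`. -/
theorem pond_generating_function_negq :
    (PowerSeries.mk fun n => (-1) ^ n * (pond n : ℤ)) * (f 2) ^ 2 * f 6 = f 3 * f 4 :=
  PondAux.pond_generating_function_negq'
end
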